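/- arXiv:2110.14358 — 6 statements merged into one kernel-verified Lean document; each statement's English description precedes it below -/
import Mathlib

section
/- Two Ferrers graphs are isomorphic if and only if their associated integer partitions are equal or conjugate to each other. -/
attribute [local instance] Classical.propDecidable

noncomputable section

/-- A Ferrers graph, encoded by its biadjacency pattern between row vertices
`r_1, …, r_n` (indexed by `Fin n`) and column vertices `c_1, …, c_m`: if `{r_i, c_j}`
is an edge then so is `{r_l, c_k}` for all `l ≥ i`, `k ≤ j`, and `{r_1, c_1}` and
`{r_n, c_m}` are edges. -/
structure FerrersGraph where
  n : ℕ
  m : ℕ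
  hn : 0 < n
  hm : 0 < m
  adj : Fin n → Fin m → Prop
  mono : ∀ i i' : Fin n, ∀ j j' : Fin m, adj i j → i ≤ i' → j' ≤ j → adj i' j'
  corner1 : adj ⟨0, hn⟩ ⟨0, hm⟩
  corner2 : adj ⟨n - 1, Nat.sub_lt hn one_pos⟩ ⟨m - 1, Nat.sub_lt hm one_pos⟩

/-- The bipartite simple graph associated to a Ferrers graph. -/
def FerrersGraph.graph (G : FerrersGraph) : SimpleGraph (Fin G.n ⊕ Fin G.m) :=
  SimpleGraph.fromRel fun u v =>
    match u, v with
    | Sum.inl i, Sum.inr j => G.adj i j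
    | _, _ => False

/-- The partition associated to a Ferrers graph (the degrees of the row vertices),
recorded as a multiset. -/
def FerrersGraph.rowPartition (G : FerrersGraph) : Multiset ℕ :=
  Finset.univ.val.map fun i : Fin G.n => (Finset.univ.filter fun j => G.adj i j).card

/-- The conjugate of the associated partition (the degrees of the column vertices),
recorded as a multiset. -/
def FerrersGraph.colPartition (G : FerrersGraph) : Multiset ℕ :=
  Finset.univ.val.map fun j : Fin G.m => (Finset.univ.filter fun i => G.adj i j).card

/-! A Ferrers graph is determined by its row degrees, since `r_i ~ c_j` iff `j < deg r_i`.
It is connected (every row meets `c_1`, every column meets `r_n`), so an isomorphism either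
preserves the two sides of the bipartition or exchanges them. In the first case it matches the
row degrees; in the second it does so after composing with the transpose, whose row degrees
are the column degrees of the original graph. -/

open Finset

theorem Equiv.exists_eq_sumCongr {α β γ δ : Type*} (e : α ⊕ β ≃ γ ⊕ δ)
    (he : ∀ v, (e v).isLeft = v.isLeft) : ∃ (e₁ : α ≃ γ) (e₂ : β ≃ δ), e = e₁.sumCongr e₂ := by
  have hl : ∀ v, v.isLeft ↔ (e v).isLeft := by simp [he]
  have hr : ∀ v, v.isRight ↔ (e v).isRight := fun v => by
    rw [← Sum.not_isLeft, ← Sum.not_isLeft, he]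
  refine ⟨(Equiv.sumIsLeft.symm.trans (e.subtypeEquiv hl)).trans Equiv.sumIsLeft,
    (Equiv.sumIsRight.symm.trans (e.subtypeEquiv hr)).trans Equiv.sumIsRight, ?_⟩
  ext (a | b) <;> simp

theorem Multiset.map_univ_val_comp_equiv {α β γ : Type*} [Fintype α] [Fintype β] (e : α ≃ β)
    (g : β → γ) : univ.val.map (g ∘ e) = univ.val.map g := by
  rw [← Multiset.map_map, Multiset.map_univ_val_equiv]

theorem Fin.eq_of_monotone_of_map_univ_val_eq {α : Type*} [PartialOrder α] {n : ℕ}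
    {f g : Fin n → α} (hf : Monotone f) (hg : Monotone g)
    (h : univ.val.map f = univ.val.map g) : f = g := by
  rw [Fin.univ_val_map, Fin.univ_val_map, Multiset.coe_eq_coe] at h
  exact List.ofFn_injective <|
    h.eq_of_sortedLE (List.sortedLE_ofFn_iff.2 hf) (List.sortedLE_ofFn_iff.2 hg)

theorem Fin.mem_iff_lt_card_of_isLowerSet {m : ℕ} {s : Finset (Fin m)}
    (hs : IsLowerSet (s : Set (Fin m))) (j : Fin m) : j ∈ s ↔ j.val < #s := by
  constructor
  · intro hj
    have := card_le_card fun k (hk : k ∈ Iic j) => hs (mem_Iic.1 hk) hj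
    rw [Fin.card_Iic] at this
    omega
  · intro hlt
    by_contra hj
    have := card_le_card fun k (hk : k ∈ s) => mem_Iio.2 (lt_of_not_ge fun hjk => hj (hs hjk hk))
    rw [Fin.card_Iio] at this
    omega

namespace FerrersGraph

section

variable (K : FerrersGraph)

def rowDeg (i : Fin K.n) : ℕ := (Finset.univ.filter fun j => K.adj i j).card

def firstCol : Fin K.m := ⟨0, K.hm⟩

def lastRow : Fin K.n := ⟨K.n - 1, Nat.sub_lt K.hn one_pos⟩

theorem rowPartition_eq_map_rowDeg : K.rowPartition = univ.val.map K.rowDeg := rfl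

@[simp]
theorem graph_adj_inl_inr (i : Fin K.n) (j : Fin K.m) :
    K.graph.Adj (.inl i) (.inr j) ↔ K.adj i j := by
  simp [graph]

@[simp]
theorem graph_adj_inr_inl (i : Fin K.n) (j : Fin K.m) :
    K.graph.Adj (.inr j) (.inl i) ↔ K.adj i j := by
  simp [graph]

@[simp]
theorem not_graph_adj_inl_inl (i i' : Fin K.n) : ¬ K.graph.Adj (.inl i) (.inl i') := by
  simp [graph]

@[simp]
theorem not_graph_adj_inr_inr (j j' : Fin K.m) : ¬ K.graph.Adj (.inr j) (.inr j') := by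
  simp [graph]

theorem isLeft_eq_not_of_graph_adj {u v : Fin K.n ⊕ Fin K.m} (h : K.graph.Adj u v) :
    u.isLeft = !v.isLeft := by
  rcases u with i | j <;> rcases v with i' | j' <;> simp_all

theorem adj_firstCol (i : Fin K.n) : K.adj i K.firstCol :=
  K.mono _ i _ _ K.corner1 (Fin.le_def.2 (Nat.zero_le _)) le_rfl

theorem adj_lastRow (j : Fin K.m) : K.adj K.lastRow j :=
  K.mono _ _ _ j K.corner2 le_rfl (Fin.le_def.2 (Nat.le_sub_one_of_lt j.isLt))

theorem adj_iff_lt_rowDeg (i : Fin K.n) (j : Fin K.m) : K.adj i j ↔ j.val < K.rowDeg i := by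
  have hs : IsLowerSet ((univ.filter fun j => K.adj i j : Finset (Fin K.m)) : Set (Fin K.m)) :=
    fun j j' hj' hj => by simpa using K.mono i i j j' (by simpa using hj) le_rfl hj'
  simpa [rowDeg] using Fin.mem_iff_lt_card_of_isLowerSet hs j

theorem rowDeg_mono : Monotone K.rowDeg := fun i i' h =>
  card_le_card fun j hj => by simpa using K.mono i i' j j (by simpa using hj) h le_rfl

theorem rowDeg_lastRow : K.rowDeg K.lastRow = K.m := by
  simp [rowDeg, K.adj_lastRow]

/-- Rows and columns are exchanged and both reversed, so that the result is again a Ferrers graph. -/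
abbrev transpose : FerrersGraph where
  n := K.m
  m := K.n
  hn := K.hm
  hm := K.hn
  adj j i := K.adj i.rev j.rev
  mono _ _ _ _ h hj hi := K.mono _ _ _ _ h (Fin.rev_le_rev.2 hi) (Fin.rev_le_rev.2 hj)
  corner1 := by
    convert K.corner2 using 2 <;> simp
  corner2 := by
    have := K.hn
    have := K.hm
    convert K.corner1 using 2 <;> simp <;> omega

theorem rowPartition_transpose : K.transpose.rowPartition = K.colPartition :=
  calc K.transpose.rowPartition
      = univ.val.map ((fun j => (univ.filter fun i => K.adj i j).card) ∘ Fin.revPerm) :=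
        Multiset.map_congr rfl fun j _ => card_equiv Fin.revPerm fun i => by simp
    _ = K.colPartition := Multiset.map_univ_val_comp_equiv _ _

def transposeIso : K.transpose.graph ≃g K.graph where
  toEquiv := (Equiv.sumComm _ _).trans (Fin.revPerm.sumCongr Fin.revPerm)
  map_rel_iff' := by
    rintro (j | i) (j' | i') <;> simp [graph]

theorem isLeft_transposeIso_symm (v : Fin K.n ⊕ Fin K.m) :
    (K.transposeIso.symm v).isLeft = !v.isLeft := by
  rcases v with i | j <;> rfl

end

variable {G H : FerrersGraph}

theorem isLeft_iso_apply_eq_or (f : G.graph ≃g H.graph) :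
    (∀ v, (f v).isLeft = v.isLeft) ∨ (∀ v, (f v).isLeft = !v.isLeft) := by
  have hrow (i : Fin G.n) : (f (.inl i)).isLeft = !(f (.inr G.firstCol)).isLeft :=
    H.isLeft_eq_not_of_graph_adj (f.map_adj_iff.2 (by simpa using G.adj_firstCol i))
  have hcol (j : Fin G.m) : (f (.inr j)).isLeft = (f (.inr G.firstCol)).isLeft := by
    rw [H.isLeft_eq_not_of_graph_adj (f.map_adj_iff.2 ((G.graph_adj_inr_inl _ _).2
      (G.adj_lastRow j))), hrow, Bool.not_not]
  cases hc : (f (.inr G.firstCol)).isLeft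
  · left
    rintro (i | j) <;> simp [hrow, hcol, hc]
  · right
    rintro (i | j) <;> simp [hrow, hcol, hc]

def isoOfAdjIff (σ : Fin G.n ≃ Fin H.n) (τ : Fin G.m ≃ Fin H.m)
    (h : ∀ i j, G.adj i j ↔ H.adj (σ i) (τ j)) : G.graph ≃g H.graph where
  toEquiv := σ.sumCongr τ
  map_rel_iff' := by
    rintro (i | j) (i' | j') <;> simp [h]

theorem exists_adj_iff_of_iso (f : G.graph ≃g H.graph) (hf : ∀ v, (f v).isLeft = v.isLeft) :
    ∃ (σ : Fin G.n ≃ Fin H.n) (τ : Fin G.m ≃ Fin H.m), ∀ i j, G.adj i j ↔ H.adj (σ i) (τ j) := by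
  obtain ⟨σ, τ, hστ⟩ := f.toEquiv.exists_eq_sumCongr hf
  have hfστ (v : Fin G.n ⊕ Fin G.m) : f v = σ.sumCongr τ v := congrArg (· v) hστ
  refine ⟨σ, τ, fun i j => ?_⟩
  rw [← G.graph_adj_inl_inr, ← f.map_adj_iff, hfστ, hfστ]
  simp

theorem rowPartition_eq_iff_exists_adj_iff : G.rowPartition = H.rowPartition ↔
    ∃ (σ : Fin G.n ≃ Fin H.n) (τ : Fin G.m ≃ Fin H.m), ∀ i j, G.adj i j ↔ H.adj (σ i) (τ j) := by
  constructor
  · intro h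
    have hn : G.n = H.n := by simpa [rowPartition] using congrArg Multiset.card h
    have hdeg : G.rowDeg = H.rowDeg ∘ finCongr hn := by
      refine Fin.eq_of_monotone_of_map_univ_val_eq G.rowDeg_mono
        (H.rowDeg_mono.comp fun a b hab => by simpa using hab) ?_
      rw [Multiset.map_univ_val_comp_equiv, ← rowPartition_eq_map_rowDeg, h]
      rfl
    have hm : G.m = H.m :=
      calc G.m = G.rowDeg G.lastRow := G.rowDeg_lastRow.symm
        _ = H.rowDeg (finCongr hn G.lastRow) := congrFun hdeg _
        _ = H.rowDeg H.lastRow := congrArg H.rowDeg (Fin.ext (by simp [lastRow, hn]))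
        _ = H.m := H.rowDeg_lastRow
    refine ⟨finCongr hn, finCongr hm, fun i j => ?_⟩
    simp [adj_iff_lt_rowDeg, hdeg]
  · rintro ⟨σ, τ, h⟩
    have hdeg : G.rowDeg = H.rowDeg ∘ σ :=
      funext fun i => by
        unfold rowDeg
        exact card_equiv τ fun j => by simp [h]
    rw [rowPartition_eq_map_rowDeg, hdeg, Multiset.map_univ_val_comp_equiv]
    rfl

end FerrersGraph

open FerrersGraph in
/-- Two Ferrers graphs are isomorphic if and only if their associated partitions are
equal or conjugate to each other. -/
theorem ferrersGraph_iso_iff_partition_eq_or_conj (G H : FerrersGraph) :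
    Nonempty (G.graph ≃g H.graph) ↔
      G.rowPartition = H.rowPartition ∨ G.rowPartition = H.colPartition := by
  rw [← rowPartition_transpose, rowPartition_eq_iff_exists_adj_iff,
    rowPartition_eq_iff_exists_adj_iff]
  constructor
  · rintro ⟨f⟩
    rcases isLeft_iso_apply_eq_or f with hf | hf
    · exact .inl (exists_adj_iff_of_iso f hf)
    · refine .inr (exists_adj_iff_of_iso (f.trans H.transposeIso.symm) fun v => ?_)
      rw [RelIso.trans_apply, isLeft_transposeIso_symm, hf, Bool.not_not]
  · rintro (⟨σ, τ, h⟩ | ⟨σ, τ, h⟩)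
    · exact ⟨isoOfAdjIff σ τ h⟩
    · exact ⟨(isoOfAdjIff σ τ h).trans H.transposeIso⟩
end
end

section
/- For any weak composition nu = (nu_1,...,nu_n) of m, there is an invertible Z-linear transformation of R^{m+n+1} taking the homogenized nu-arrangement H_nu to the graphic hyperplane arrangement of the Ferrers graph G_nu (with one additional isolated vertex). Consequently the intersection lattice of H_nu is isomorphic to the bond lattice of G_nu. -/
attribute [local instance] Classical.propDecidable

noncomputable section

/-- The homogenized `ν`-arrangement `H_ν` in `ℝ^{m+n+1}`: the coordinates are
`x_1, …, x_{n+1}` (indexed by `Fin (n+1)`) and `y_i^{(ℓ)}` for `i : Fin n`,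
`ℓ : Fin (ν i)`, and the hyperplanes are `x_i - x_j = y_i^{(ℓ)}` for `i < j`. -/
def homogenizedArrangement (n : ℕ) (ν : Fin n → ℕ) :
    Set (Set ((Fin (n + 1) ⊕ (Σ i : Fin n, Fin (ν i))) → ℝ)) :=
  {H | ∃ (i : Fin n) (j : Fin (n + 1)) (l : Fin (ν i)), (i : ℕ) < (j : ℕ) ∧
    H = {w | w (Sum.inl i.castSucc) - w (Sum.inl j) = w (Sum.inr ⟨i, l⟩)}}

/-- The graphic arrangement of the Ferrers graph `G_ν` (together with one extra
isolated vertex): the vertices are the columns `(2i-1)^{(ℓ)}`, the rows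
`2, 4, …, 2n`, and the isolated vertex, and the hyperplanes are
`x_{(2i-1)^{(ℓ)}} = x_{2j}` for `2i - 1 < 2j`, i.e. `i ≤ j` (`0`-indexed). -/
def ferrersGraphicArrangement (n : ℕ) (ν : Fin n → ℕ) :
    Set (Set ((((Σ i : Fin n, Fin (ν i)) ⊕ Fin n) ⊕ Unit) → ℝ)) :=
  {H | ∃ (i : Fin n) (l : Fin (ν i)) (j : Fin n), (i : ℕ) ≤ (j : ℕ) ∧
    H = {w | w (Sum.inl (Sum.inl ⟨i, l⟩)) = w (Sum.inl (Sum.inr j))}}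

/-- The intersection poset of an arrangement: all nonempty intersections of
subfamilies (including the ambient space, as the empty intersection), ordered by
inclusion (which is the reverse of the usual order on the intersection lattice). -/
def interPoset {X : Type*} (A : Set (Set X)) : Set (Set X) :=
  {s | s.Nonempty ∧ ∃ B ⊆ A, s = ⋂₀ B}

/-! The substitution that sends `x_i - y_i^{(ℓ)}` to the column vertex `(2i-1)^{(ℓ)}`,
`x_{j+1}` to the row vertex `2j` and `x_0` to the isolated vertex is unimodular, and it
turns the hyperplane `x_i - x_j = y_i^{(ℓ)}` into `x_{(2i-1)^{(ℓ)}} = x_{2(j-1)}`, the edge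
condition `i ≤ j - 1` of `G_ν` being exactly `i < j`. A bijection of the ambient space
carrying one arrangement onto the other carries intersections to intersections. -/

section InterPoset

variable {X Y : Type*}

lemma Equiv.image_sInter (e : X ≃ Y) (B : Set (Set X)) :
    e '' ⋂₀ B = ⋂₀ ((fun H => e '' H) '' B) :=
  (e.toOrderIsoSet.map_sInf B).trans sInf_image.symm

lemma Equiv.image_mem_interPoset {e : X ≃ Y} {A : Set (Set X)} {s : Set X}
    (hs : s ∈ interPoset A) : e '' s ∈ interPoset ((fun H => e '' H) '' A) := by
  obtain ⟨hne, B, hBA, rfl⟩ := hs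
  exact ⟨hne.image e, _, Set.image_mono hBA, e.image_sInter B⟩

lemma Equiv.image_mem_interPoset_iff {e : X ≃ Y} {A : Set (Set X)} {s : Set X} :
    e '' s ∈ interPoset ((fun H => e '' H) '' A) ↔ s ∈ interPoset A := by
  refine ⟨fun hs => ?_, Equiv.image_mem_interPoset⟩
  simpa [Set.image_image] using e.symm.image_mem_interPoset hs

def interPosetOrderIso (e : X ≃ Y) {A : Set (Set X)} {B : Set (Set Y)}
    (h : (fun H => e '' H) '' A = B) :
    {s // s ∈ interPoset A} ≃o {s // s ∈ interPoset B} :=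
  { e.toOrderIsoSet.toEquiv.subtypeEquiv fun _ => h ▸ e.image_mem_interPoset_iff.symm with
    map_rel_iff' := e.toOrderIsoSet.map_rel_iff }

end InterPoset

namespace HomogenizedArrangement

variable {n : ℕ} {ν : Fin n → ℕ}

abbrev Coord (n : ℕ) (ν : Fin n → ℕ) := Fin (n + 1) ⊕ (Σ i : Fin n, Fin (ν i))

abbrev Vertex (n : ℕ) (ν : Fin n → ℕ) := ((Σ i : Fin n, Fin (ν i)) ⊕ Fin n) ⊕ Unit

def xVertex : Fin (n + 1) → Vertex n ν :=
  Fin.cases (Sum.inr ()) fun j => Sum.inl (Sum.inr j)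

@[simp] lemma xVertex_zero : (xVertex 0 : Vertex n ν) = Sum.inr () := rfl

@[simp] lemma xVertex_succ (j : Fin n) :
    (xVertex j.succ : Vertex n ν) = Sum.inl (Sum.inr j) := rfl

def toVertex (w : Coord n ν → ℝ) : Vertex n ν → ℝ
  | Sum.inl (Sum.inl p) => w (Sum.inl p.1.castSucc) - w (Sum.inr p)
  | Sum.inl (Sum.inr j) => w (Sum.inl j.succ)
  | Sum.inr () => w (Sum.inl 0)

def ofVertex (w : Vertex n ν → ℝ) : Coord n ν → ℝ
  | Sum.inl k => w (xVertex k)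
  | Sum.inr p => w (xVertex p.1.castSucc) - w (Sum.inl (Sum.inl p))

@[simp] lemma toVertex_xVertex (w : Coord n ν → ℝ) (k : Fin (n + 1)) :
    toVertex w (xVertex k) = w (Sum.inl k) := by
  cases k using Fin.cases <;> rfl

def coordChange (n : ℕ) (ν : Fin n → ℕ) : (Coord n ν → ℝ) ≃ₗ[ℝ] (Vertex n ν → ℝ) where
  toFun := toVertex
  invFun := ofVertex
  left_inv w := by
    funext z
    rcases z with k | p
    · exact toVertex_xVertex w k
    · exact (congrArg (· - _) (toVertex_xVertex w _)).trans (sub_sub_cancel _ _)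
  right_inv w := by
    funext z
    rcases z with (p | j) | ⟨⟩ <;> simp [ofVertex, toVertex]
  map_add' w w' := by
    funext z
    rcases z with (_ | _) | _ <;>
      simp only [toVertex, Pi.add_apply, add_sub_add_comm]
  map_smul' c w := by
    funext z
    rcases z with (_ | _) | _ <;>
      simp only [toVertex, Pi.smul_apply, smul_eq_mul, RingHom.id_apply, mul_sub]

lemma coordChange_symm_apply (w : Vertex n ν → ℝ) :
    (coordChange n ν).symm w = ofVertex w := rfl

lemma exists_intCast_sub {x y : ℝ} :
    (∃ a : ℤ, x = a) → (∃ b : ℤ, y = b) → ∃ c : ℤ, x - y = c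
  | ⟨a, ha⟩, ⟨b, hb⟩ => ⟨a - b, by rw [ha, hb, Int.cast_sub]⟩

lemma exists_intCast_coordChange {w : Coord n ν → ℝ} (hw : ∀ k, ∃ z : ℤ, w k = z) :
    ∀ v, ∃ z : ℤ, coordChange n ν w v = z
  | Sum.inl (Sum.inl _) => exists_intCast_sub (hw _) (hw _)
  | Sum.inl (Sum.inr _) => hw _
  | Sum.inr () => hw _

lemma exists_intCast_coordChange_symm {w : Vertex n ν → ℝ} (hw : ∀ v, ∃ z : ℤ, w v = z) :
    ∀ k, ∃ z : ℤ, (coordChange n ν).symm w k = z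
  | Sum.inl _ => hw _
  | Sum.inr _ => exists_intCast_sub (hw _) (hw _)

lemma image_coordChange_hyperplane (p : Σ i : Fin n, Fin (ν i)) (j : Fin n) :
    coordChange n ν '' {w | w (Sum.inl p.1.castSucc) - w (Sum.inl j.succ) = w (Sum.inr p)} =
      {w | w (Sum.inl (Sum.inl p)) = w (Sum.inl (Sum.inr j))} := by
  ext w
  rw [LinearEquiv.image_eq_preimage_symm]
  simp only [Set.mem_preimage, Set.mem_ofPred_eq, coordChange_symm_apply, ofVertex,
    xVertex_succ]
  constructor <;> intro h <;> linarith

lemma image_coordChange_homogenizedArrangement :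
    (fun H => coordChange n ν '' H) '' homogenizedArrangement n ν =
      ferrersGraphicArrangement n ν := by
  ext H
  constructor
  · rintro ⟨_, ⟨i, j, l, hij, rfl⟩, rfl⟩
    cases j using Fin.cases with
    | zero => exact absurd hij (Nat.not_lt_zero _)
    | succ j =>
      exact ⟨i, l, j, Nat.lt_succ_iff.mp hij, image_coordChange_hyperplane ⟨i, l⟩ j⟩
  · rintro ⟨i, l, j, hij, rfl⟩
    exact ⟨_, ⟨i, j.succ, l, Nat.lt_succ_of_le hij, rfl⟩, image_coordChange_hyperplane ⟨i, l⟩ j⟩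

end HomogenizedArrangement

theorem homogenizedArrangement_equiv_ferrersGraphic_general (n : ℕ) (ν : Fin n → ℕ) :
    (∃ φ : ((Fin (n + 1) ⊕ (Σ i : Fin n, Fin (ν i))) → ℝ) ≃ₗ[ℝ]
        ((((Σ i : Fin n, Fin (ν i)) ⊕ Fin n) ⊕ Unit) → ℝ),
      (∀ w, (∀ i, ∃ z : ℤ, w i = (z : ℝ)) → ∀ j, ∃ z : ℤ, φ w j = (z : ℝ)) ∧
      (∀ w, (∀ j, ∃ z : ℤ, w j = (z : ℝ)) → ∀ i, ∃ z : ℤ, φ.symm w i = (z : ℝ)) ∧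
      (fun H => (⇑φ) '' H) '' homogenizedArrangement n ν = ferrersGraphicArrangement n ν) ∧
    Nonempty ({s // s ∈ interPoset (homogenizedArrangement n ν)} ≃o
      {s // s ∈ interPoset (ferrersGraphicArrangement n ν)}) := by
  have himage := HomogenizedArrangement.image_coordChange_homogenizedArrangement (ν := ν)
  exact ⟨⟨HomogenizedArrangement.coordChange n ν,
      fun _ => HomogenizedArrangement.exists_intCast_coordChange,
      fun _ => HomogenizedArrangement.exists_intCast_coordChange_symm, himage⟩,
    ⟨interPosetOrderIso (HomogenizedArrangement.coordChange n ν).toEquiv himage⟩⟩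

/-- For any weak composition `ν` of `m`, there is an invertible `ℤ`-linear
transformation of `ℝ^{m+n+1}` carrying the homogenized `ν`-arrangement `H_ν` onto the
graphic arrangement of the Ferrers graph `G_ν` (with an extra isolated vertex);
consequently the intersection lattice of `H_ν` is isomorphic to the bond lattice of
`G_ν` (the intersection lattice of its graphic arrangement). -/
theorem homogenizedArrangement_equiv_ferrersGraphic (n m : ℕ) (ν : Fin n → ℕ)
    (hν : ∑ i, ν i = m) :
    (∃ φ : ((Fin (n + 1) ⊕ (Σ i : Fin n, Fin (ν i))) → ℝ) ≃ₗ[ℝ]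
        ((((Σ i : Fin n, Fin (ν i)) ⊕ Fin n) ⊕ Unit) → ℝ),
      (∀ w, (∀ i, ∃ z : ℤ, w i = (z : ℝ)) → ∀ j, ∃ z : ℤ, φ w j = (z : ℝ)) ∧
      (∀ w, (∀ j, ∃ z : ℤ, w j = (z : ℝ)) → ∀ i, ∃ z : ℤ, φ.symm w i = (z : ℝ)) ∧
      (fun H => (⇑φ) '' H) '' homogenizedArrangement n ν = ferrersGraphicArrangement n ν) ∧
    Nonempty ({s // s ∈ interPoset (homogenizedArrangement n ν)} ≃o
      {s // s ∈ interPoset (ferrersGraphicArrangement n ν)}) :=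
  homogenizedArrangement_equiv_ferrersGraphic_general n ν

end
end

section
/- Let S be a finite set of positive integers whose maximum 2n is even, and let S' be S with 2n and all odd elements between the second-largest even element 2m and 2n removed. The map sending a pair (F, X), where F is a generalized surjective staircase on S' and X is a proper subset of F^{-1}(2m), to the function F_hat_X on S defined by F_hat_X(a) = 2n for a in X or a in S\S', and F_hat_X(a) = F(a) otherwise, is a bijection onto the set of generalized surjective staircases on S. -/
attribute [local instance] Classical.propDecidable

noncomputable section

/-- The second-largest even element of `S` (0 if there is none). -/
def sndEvenMax (S : Finset ℕ) : ℕ :=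
  ((S.filter fun a => Even a).erase (S.sup id)).sup id

/-- `S'`: the elements of `S` that are at most the second-largest even element of `S`
(equivalently, `S` with its maximum and the odd elements above the second-largest
even element removed). -/
def Sprime (S : Finset ℕ) : Finset ℕ := S.filter fun a => a ≤ sndEvenMax S

/-- `f : ℕ → ℕ` represents a generalized surjective staircase on `S`: an excedent
map from `S` onto the even elements of `S` (normalized to be `0` off `S`). -/
def IsGSS (S : Finset ℕ) (f : ℕ → ℕ) : Prop :=
  (∀ a ∈ S, a ≤ f a ∧ f a ∈ S ∧ Even (f a)) ∧
  (∀ b ∈ S, Even b → ∃ a ∈ S, f a = b) ∧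
  (∀ a, a ∉ S → f a = 0)

/-- The map `(F, X) ↦ F̂_X`, sending a generalized surjective staircase `F` on `S'`
together with a proper subset `X` of `F⁻¹(2m)` (where `2m = max S'` is the
second-largest even element of `S`) to the staircase on `S` taking the value
`max S = 2n` on `X ∪ (S \ S')` and agreeing with `F` elsewhere, is a bijection onto
the set of generalized surjective staircases on `S`. -/
theorem staircase_extension_bijOn (S : Finset ℕ) (hne : S.Nonempty)
    (hpos : ∀ a ∈ S, 0 < a) (hmax : Even (S.max' hne))
    (htwo : 1 < (S.filter fun a => Even a).card) :
    Set.BijOn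
      (fun p : (ℕ → ℕ) × Finset ℕ => fun a : ℕ =>
        if a ∈ S then
          (if a ∈ p.2 ∨ a ∉ Sprime S then S.max' hne else p.1 a)
        else 0)
      {p : (ℕ → ℕ) × Finset ℕ | IsGSS (Sprime S) p.1 ∧
        p.2 ⊂ (Sprime S).filter fun a => p.1 a = sndEvenMax S}
      {f : ℕ → ℕ | IsGSS S f} := by
  classical
  set N := S.max' hne with hN
  set M := sndEvenMax S with hM
  have hsup : S.sup id = N := by rw [hN, Finset.max'_eq_sup', Finset.sup'_eq_sup]
  set T := (S.filter fun a => Even a).erase N with hT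
  have hNmemF : N ∈ S.filter fun a => Even a := Finset.mem_filter.2 ⟨S.max'_mem hne, hmax⟩
  have hNS : N ∈ S := S.max'_mem hne
  have hTne : T.Nonempty := by
    rw [← Finset.card_pos, hT, Finset.card_erase_of_mem hNmemF]; omega
  have hMdef : M = T.sup id := by rw [hM, sndEvenMax, hsup, hT]
  have hMT : M ∈ T := by
    obtain ⟨b, hb, hbe⟩ := Finset.exists_mem_eq_sup T hTne id
    rw [hMdef, hbe]; exact hb
  have hMS : M ∈ S := (Finset.mem_filter.1 (Finset.mem_of_mem_erase hMT)).1
  have hMeven : Even M := (Finset.mem_filter.1 (Finset.mem_of_mem_erase hMT)).2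
  have hMN : M < N := lt_of_le_of_ne (S.le_max' M hMS) (Finset.ne_of_mem_erase hMT)
  have hle : ∀ b ∈ S, Even b → b ≠ N → b ≤ M := by
    intro b hb he hbn
    rw [hMdef]
    exact Finset.le_sup (f := id) (Finset.mem_erase.2 ⟨hbn, Finset.mem_filter.2 ⟨hb, he⟩⟩)
  have hSp : ∀ a, a ∈ Sprime S ↔ a ∈ S ∧ a ≤ M := fun a => Finset.mem_filter
  have hNSp : N ∉ Sprime S := fun h => absurd ((hSp N).1 h).2 (by omega)
  have hMSp : M ∈ Sprime S := (hSp M).2 ⟨hMS, le_refl M⟩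
  refine ⟨?_, ?_, ?_⟩
  · -- MapsTo
    rintro ⟨F, X⟩ ⟨⟨hF1, hF2, hF3⟩, hX⟩
    simp only at hF1 hF2 hF3 hX
    have hXsub : X ⊆ (Sprime S).filter fun a => F a = M := hX.1
    refine ⟨?_, ?_, ?_⟩
    · intro a ha
      simp only [ha, if_true]
      split_ifs with h
      · exact ⟨S.le_max' a ha, hNS, hmax⟩
      · push_neg at h
        obtain ⟨h1, h2, h3⟩ := hF1 a h.2
        exact ⟨h1, ((hSp _).1 h2).1, h3⟩
    · intro b hb hbe
      by_cases hbN : b = N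
      · exact ⟨N, hNS, by simp [hNS, hNSp, hbN]⟩
      · have hbSp : b ∈ Sprime S := (hSp b).2 ⟨hb, hle b hb hbe hbN⟩
        by_cases hbM : b = M
        · obtain ⟨a, haf, haX⟩ := Finset.exists_of_ssubset hX
          obtain ⟨haSp, haF⟩ := Finset.mem_filter.1 haf
          refine ⟨a, ((hSp a).1 haSp).1, ?_⟩
          rw [hbM]
          simp only [((hSp a).1 haSp).1, if_true, haX, haSp]
          simpa [haX, haSp] using haF
        · obtain ⟨a, haSp, hfa⟩ := hF2 b hbSp hbe
          have haX : a ∉ X := fun h =>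
            hbM (hfa ▸ (Finset.mem_filter.1 (hXsub h)).2.symm ▸ rfl)
          refine ⟨a, ((hSp a).1 haSp).1, ?_⟩
          simp only [((hSp a).1 haSp).1, if_true]
          rw [if_neg (by simp [haX, haSp])]
          exact hfa
    · intro a ha; simp [ha]
  · -- InjOn
    rintro ⟨F, X⟩ ⟨⟨hF1, hF2, hF3⟩, hX⟩ ⟨G, Y⟩ ⟨⟨hG1, hG2, hG3⟩, hY⟩ heq
    simp only at hF1 hF2 hF3 hX hG1 hG2 hG3 hY
    have h := fun a => congrFun heq a
    simp only at h
    have hXsub : X ⊆ (Sprime S).filter fun a => F a = M := hX.1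
    have hYsub : Y ⊆ (Sprime S).filter fun a => G a = M := hY.1
    have hXY : X = Y := by
      ext a
      by_cases haSp : a ∈ Sprime S
      · have haS : a ∈ S := ((hSp a).1 haSp).1
        have h' := h a
        simp only [haS, if_true, haSp, not_true, or_false] at h'
        constructor
        · intro haX
          by_contra haY
          rw [if_pos haX, if_neg haY] at h'
          have := ((hSp _).1 (hG1 a haSp).2.1).2
          omega
        · intro haY
          by_contra haX
          rw [if_neg haX, if_pos haY] at h'
          have := ((hSp _).1 (hF1 a haSp).2.1).2
          omega
      · constructor
        · intro haX; exact absurd (Finset.mem_filter.1 (hXsub haX)).1 haSp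
        · intro haY; exact absurd (Finset.mem_filter.1 (hYsub haY)).1 haSp
    have hFG : F = G := by
      funext a
      by_cases haSp : a ∈ Sprime S
      · by_cases haX : a ∈ X
        · rw [(Finset.mem_filter.1 (hXsub haX)).2,
            (Finset.mem_filter.1 (hYsub (hXY ▸ haX))).2]
        · have haS : a ∈ S := ((hSp a).1 haSp).1
          have h' := h a
          simp only [haS, if_true, haSp, not_true, or_false, haX, hXY ▸ haX,
            if_false] at h'
          rw [hXY] at haX
          simpa [haX] using h'
      · rw [hF3 a haSp, hG3 a haSp]
    exact Prod.ext hFG hXY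
  · -- SurjOn
    intro f hf
    obtain ⟨hf1, hf2, hf3⟩ := hf
    set X : Finset ℕ := (Sprime S).filter (fun a => f a = N) with hXdef
    set F : ℕ → ℕ := fun a => if a ∈ X then M else if a ∈ Sprime S then f a else 0
      with hFdef
    have hmemX : ∀ a, a ∈ X ↔ a ∈ Sprime S ∧ f a = N := fun a => Finset.mem_filter
    have hfSp : ∀ a, a ∈ Sprime S → a ∉ X → f a ∈ Sprime S ∧ a ≤ f a := by
      intro a haSp haX
      have haS : a ∈ S := ((hSp a).1 haSp).1
      obtain ⟨h1, h2, h3⟩ := hf1 a haS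
      have hfn : f a ≠ N := fun hc => haX ((hmemX a).2 ⟨haSp, hc⟩)
      exact ⟨(hSp _).2 ⟨h2, hle _ h2 h3 hfn⟩, h1⟩
    have hgss : IsGSS (Sprime S) F := by
      refine ⟨?_, ?_, ?_⟩
      · intro a haSp
        by_cases haX : a ∈ X
        · simp only [hFdef, haX, if_true]
          exact ⟨((hSp a).1 haSp).2, hMSp, hMeven⟩
        · obtain ⟨h2, h1⟩ := hfSp a haSp haX
          simp only [hFdef, haX, if_false, haSp, if_true]
          exact ⟨h1, h2, (hf1 a ((hSp a).1 haSp).1).2.2⟩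
      · intro b hbSp hbe
        have hbS : b ∈ S := ((hSp b).1 hbSp).1
        have hbM : b ≤ M := ((hSp b).1 hbSp).2
        obtain ⟨a, haS, hfa⟩ := hf2 b hbS hbe
        have haSp : a ∈ Sprime S := (hSp a).2 ⟨haS, le_trans (le_trans (hf1 a haS).1 hfa.le) hbM⟩
        have haX : a ∉ X := fun h => by
          have := ((hmemX a).1 h).2; omega
        exact ⟨a, haSp, by simp [hFdef, haX, haSp, hfa]⟩
      · intro a ha
        have haX : a ∉ X := fun h => ha ((hmemX a).1 h).1
        simp [hFdef, haX, ha]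
    have hproper : X ⊂ (Sprime S).filter fun a => F a = M := by
      rw [Finset.ssubset_iff_of_subset]
      · obtain ⟨a, haS, hfa⟩ := hf2 M hMS hMeven
        have haSp : a ∈ Sprime S := (hSp a).2 ⟨haS, le_trans (hf1 a haS).1 hfa.le⟩
        have haX : a ∉ X := fun h => by
          have := ((hmemX a).1 h).2; omega
        exact ⟨a, Finset.mem_filter.2 ⟨haSp, by simp [hFdef, haX, haSp, hfa]⟩, haX⟩
      · intro a haX
        exact Finset.mem_filter.2 ⟨((hmemX a).1 haX).1, by simp [hFdef, haX]⟩
    refine ⟨(F, X), ⟨hgss, hproper⟩, ?_⟩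
    funext a
    by_cases haS : a ∈ S
    · simp only [haS, if_true]
      by_cases hc : a ∈ X ∨ a ∉ Sprime S
      · rw [if_pos hc]
        rcases hc with hc | hc
        · exact (((hmemX a).1 hc).2).symm
        · have haM : ¬ a ≤ M := fun h => hc ((hSp a).2 ⟨haS, h⟩)
          obtain ⟨h1, h2, h3⟩ := hf1 a haS
          by_contra hfn
          have := hle _ h2 h3 (fun h => hfn h.symm)
          omega
      · rw [if_neg hc]
        push_neg at hc
        simp [hFdef, hc.1, hc.2]
    · simp [haS, hf3 a haS]

end
end

section
/- If S and T are finite sets of positive integers with even maxima and lambda(S) = lambda(T), then Lambda_S = Lambda_T as polynomials in six variables. -/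
attribute [local instance] Classical.propDecidable

noncomputable section

/-- Generalized surjective staircases on `S`: excedent maps from `S` onto the even
elements of `S`. -/
def Staircases (S : Finset ℕ) : Finset (↥S → ↥S) :=
  Finset.univ.filter fun f =>
    (∀ a : ↥S, (a : ℕ) ≤ (f a : ℕ) ∧ Even ((f a : ℕ))) ∧
    (∀ b : ↥S, Even (b : ℕ) → ∃ a : ↥S, f a = b)

/-- number of odd maxima -/
def moS (S : Finset ℕ) (f : ↥S → ↥S) : ℕ :=
  (Finset.univ.filter fun a : ↥S =>
    (a : ℕ) ≤ sndEvenMax S ∧ Odd (a : ℕ) ∧ ((f a : ℕ) = S.sup id)).card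

/-- number of even maxima -/
def meS (S : Finset ℕ) (f : ↥S → ↥S) : ℕ :=
  (Finset.univ.filter fun a : ↥S =>
    (a : ℕ) ≤ sndEvenMax S ∧ Even (a : ℕ) ∧ ((f a : ℕ) = S.sup id)).card

def IsFixedPtS (S : Finset ℕ) (f : ↥S → ↥S) (a : ↥S) : Prop :=
  (a : ℕ) ≤ sndEvenMax S ∧ Even (a : ℕ) ∧ f a = a

/-- number of isolated fixed points -/
def fiS (S : Finset ℕ) (f : ↥S → ↥S) : ℕ :=
  (Finset.univ.filter fun a : ↥S =>
    IsFixedPtS S f a ∧ ∀ b : ↥S, f b = a → b = a).card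

/-- number of doubled fixed points -/
def fdS (S : Finset ℕ) (f : ↥S → ↥S) : ℕ :=
  (Finset.univ.filter fun a : ↥S =>
    IsFixedPtS S f a ∧ ∃ b : ↥S, b ≠ a ∧ f b = a).card

/-- the least even element of `S` larger than `a` -/
def nextEven (S : Finset ℕ) (a : ℕ) : ℕ := sInf {b : ℕ | b ∈ S ∧ Even b ∧ a < b}

def IsSurfixedPtS (S : Finset ℕ) (f : ↥S → ↥S) (a : ↥S) : Prop :=
  (a : ℕ) ≤ sndEvenMax S ∧ Odd (a : ℕ) ∧ (f a : ℕ) = nextEven S (a : ℕ)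

/-- number of isolated surfixed points -/
def siS (S : Finset ℕ) (f : ↥S → ↥S) : ℕ :=
  (Finset.univ.filter fun a : ↥S =>
    IsSurfixedPtS S f a ∧ ∀ b : ↥S, f b = f a → b = a).card

/-- number of doubled surfixed points -/
def sdS (S : Finset ℕ) (f : ↥S → ↥S) : ℕ :=
  (Finset.univ.filter fun a : ↥S =>
    IsSurfixedPtS S f a ∧ ∃ b : ↥S, b ≠ a ∧ f b = f a).card

/-- The generalized Dumont–Foata polynomial `Λ_S`, evaluated at elements of a
commutative ring. -/
def Lam (R : Type) [CommRing R] (S : Finset ℕ) (x y z xb yb zb : R) : R :=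
  ∑ f ∈ Staircases S,
    x ^ moS S f * y ^ fdS S f * z ^ siS S f * xb ^ meS S f * yb ^ fiS S f * zb ^ sdS S f


/-- The partition `λ(S)`: for each even element of `S`, the number of odd elements
of `S` below it, recorded as a multiset. -/
def lambdaV (V : Finset ℕ) : Multiset ℕ :=
  (V.filter fun a => Even a).val.map fun e => (V.filter fun o => Odd o ∧ o < e).card


/-! ### Auxiliary development -/

namespace DumontAux

open Finset

/-- count of odd elements below `e` -/
def cnt (V : Finset ℕ) (e : ℕ) : ℕ := (V.filter fun o => Odd o ∧ o < e).card

lemma lambdaV_def (V : Finset ℕ) :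
    lambdaV V = (V.filter fun a => Even a).val.map (cnt V) := rfl

lemma sup_id_eq_max' (V : Finset ℕ) (h : V.Nonempty) : V.sup id = V.max' h :=
  le_antisymm (Finset.sup_le fun b hb => Finset.le_max' _ _ hb)
    (Finset.le_sup (f := id) (V.max'_mem h))

lemma sup_id_mem (V : Finset ℕ) (h : V.Nonempty) : V.sup id ∈ V := by
  rw [sup_id_eq_max' V h]; exact V.max'_mem h

lemma cnt_min_eq_zero (V : Finset ℕ) (h : V.Nonempty) : cnt V (V.min' h) = 0 := by
  rw [cnt, Finset.card_eq_zero, Finset.filter_eq_empty_iff]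
  rintro o ho ⟨-, hlt⟩
  exact absurd (V.min'_le o ho) (not_le.mpr hlt)

lemma zero_mem_lambdaV_iff (V : Finset ℕ) (h : V.Nonempty) :
    0 ∈ lambdaV V ↔ Even (V.min' h) := by
  constructor
  · intro h0
    rw [lambdaV_def] at h0
    obtain ⟨e, he, hc⟩ := Multiset.mem_map.mp h0
    rw [Finset.mem_val, Finset.mem_filter] at he
    by_contra hodd
    rw [Nat.not_even_iff_odd] at hodd
    have hne : V.min' h ≠ e := by
      rintro rfl; exact (Nat.not_even_iff_odd.mpr hodd) he.2
    have hlt : V.min' h < e := lt_of_le_of_ne (V.min'_le e he.1) hne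
    have hmem : V.min' h ∈ V.filter fun o => Odd o ∧ o < e :=
      Finset.mem_filter.mpr ⟨V.min'_mem h, hodd, hlt⟩
    have hpos := Finset.card_pos.mpr ⟨_, hmem⟩
    rw [cnt] at hc
    omega
  · intro hev
    rw [lambdaV_def]
    refine Multiset.mem_map.mpr ⟨V.min' h, ?_, cnt_min_eq_zero V h⟩
    exact Finset.mem_val.mpr (Finset.mem_filter.mpr ⟨V.min'_mem h, hev⟩)

lemma odd_card_eq_sup (V : Finset ℕ) (h : V.Nonempty) (hmax : Even (V.max' h)) :
    (V.filter fun o => Odd o).card = (lambdaV V).sup := by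
  apply le_antisymm
  · have hmem : cnt V (V.max' h) ∈ lambdaV V := by
      rw [lambdaV_def]
      exact Multiset.mem_map.mpr ⟨V.max' h,
        Finset.mem_val.mpr (Finset.mem_filter.mpr ⟨V.max'_mem h, hmax⟩), rfl⟩
    have heq : (V.filter fun o => Odd o).card = cnt V (V.max' h) := by
      rw [cnt]
      congr 1
      apply Finset.filter_congr
      intro o ho
      constructor
      · intro hodd
        refine ⟨hodd, lt_of_le_of_ne (V.le_max' o ho) ?_⟩
        rintro rfl
        exact (Nat.not_even_iff_odd.mpr hodd) hmax
      · exact fun hh => hh.1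
    rw [heq]
    exact Multiset.le_sup hmem
  · apply Multiset.sup_le.mpr
    intro x hx
    rw [lambdaV_def] at hx
    obtain ⟨e, _, hc⟩ := Multiset.mem_map.mp hx
    rw [← hc, cnt]
    apply Finset.card_le_card
    intro o ho
    rw [Finset.mem_filter] at ho ⊢
    exact ⟨ho.1, ho.2.1⟩

lemma card_eq_lambda (V : Finset ℕ) (h : V.Nonempty) (hmax : Even (V.max' h)) :
    V.card = Multiset.card (lambdaV V) + (lambdaV V).sup := by
  rw [← odd_card_eq_sup V h hmax]
  have hml : Multiset.card (lambdaV V) = (V.filter fun a => Even a).card := by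
    rw [lambdaV_def, Multiset.card_map]; rfl
  rw [hml]
  have hsplit := Finset.card_filter_add_card_filter_not
    (s := V) (p := fun a => Even a)
  have hodd : (V.filter fun a => ¬ Even a) = V.filter fun o => Odd o := by
    apply Finset.filter_congr
    intro o _
    exact Nat.not_even_iff_odd
  rw [hodd] at hsplit
  omega

lemma cnt_erase_even (V : Finset ℕ) {m : ℕ} (hm : Even m) : cnt (V.erase m) = cnt V := by
  funext e
  rw [cnt, cnt, Finset.filter_erase, Finset.erase_eq_of_notMem]
  intro hmem
  rw [Finset.mem_filter] at hmem
  exact (Nat.not_even_iff_odd.mpr hmem.2.1) hm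

lemma lambda_erase_even (V : Finset ℕ) (h : V.Nonempty) (hm : Even (V.min' h)) :
    lambdaV (V.erase (V.min' h)) = (lambdaV V).erase 0 := by
  have hmE : V.min' h ∈ (V.filter fun a => Even a).val :=
    Finset.mem_val.mpr (Finset.mem_filter.mpr ⟨V.min'_mem h, hm⟩)
  rw [lambdaV_def, lambdaV_def, cnt_erase_even V hm, Finset.filter_erase, Finset.erase_val,
    Multiset.map_erase_of_mem _ _ hmE, cnt_min_eq_zero V h]

lemma lambda_erase_odd (V : Finset ℕ) (h : V.Nonempty) (hm : Odd (V.min' h)) :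
    lambdaV (V.erase (V.min' h)) = (lambdaV V).map (· - 1) := by
  rw [lambdaV_def, lambdaV_def, Multiset.map_map]
  have hfilter : ((V.erase (V.min' h)).filter fun a => Even a) = V.filter fun a => Even a := by
    rw [Finset.filter_erase, Finset.erase_eq_of_notMem]
    intro hmem
    rw [Finset.mem_filter] at hmem
    exact (Nat.not_odd_iff_even.mpr hmem.2) hm
  rw [hfilter]
  apply Multiset.map_congr rfl
  intro e he
  rw [Finset.mem_val, Finset.mem_filter] at he
  have hne : V.min' h ≠ e := by
    rintro rfl; exact (Nat.not_odd_iff_even.mpr he.2) hm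
  have hlt : V.min' h < e := lt_of_le_of_ne (V.min'_le e he.1) hne
  show cnt (V.erase (V.min' h)) e = cnt V e - 1
  rw [cnt, cnt, Finset.filter_erase, Finset.card_erase_of_mem]
  exact Finset.mem_filter.mpr ⟨V.min'_mem h, hm, hlt⟩

lemma max'_erase_min' (V : Finset ℕ) (h : V.Nonempty) (h2 : (V.erase (V.min' h)).Nonempty) :
    (V.erase (V.min' h)).max' h2 = V.max' h := by
  apply le_antisymm
  · exact Finset.max'_subset h2 (Finset.erase_subset _ _)
  · apply Finset.le_max'
    rw [Finset.mem_erase]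
    refine ⟨?_, V.max'_mem h⟩
    obtain ⟨x, hx⟩ := h2
    rw [Finset.mem_erase] at hx
    intro heq
    have h1 := V.le_max' x hx.2
    have h2' := V.min'_le x hx.2
    have h3 : x ≠ V.min' h := hx.1
    omega

lemma parity_sort_eq : ∀ (n : ℕ) (S T : Finset ℕ), S.card = n → T.card = n →
    (∀ hS : S.Nonempty, Even (S.max' hS)) → (∀ hT : T.Nonempty, Even (T.max' hT)) →
    lambdaV S = lambdaV T →
    (S.sort (· ≤ ·)).map (· % 2) = (T.sort (· ≤ ·)).map (· % 2) := by
  intro n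
  induction n with
  | zero =>
    intro S T hS hT _ _ _
    rw [Finset.card_eq_zero] at hS hT
    subst hS; subst hT
    simp
  | succ n ih =>
    intro S T hScard hTcard hSmax hTmax hlam
    have hSne : S.Nonempty := Finset.card_pos.mp (by omega)
    have hTne : T.Nonempty := Finset.card_pos.mp (by omega)
    have hparmin : Even (S.min' hSne) ↔ Even (T.min' hTne) := by
      rw [← zero_mem_lambdaV_iff S hSne, ← zero_mem_lambdaV_iff T hTne, hlam]
    have hsortS : S.sort (· ≤ ·) = S.min' hSne :: (S.erase (S.min' hSne)).sort (· ≤ ·) := by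
      conv_lhs => rw [← Finset.insert_erase (S.min'_mem hSne)]
      exact Finset.sort_insert _ (fun b hb => S.min'_le b (Finset.mem_of_mem_erase hb))
        (Finset.notMem_erase _ _)
    have hsortT : T.sort (· ≤ ·) = T.min' hTne :: (T.erase (T.min' hTne)).sort (· ≤ ·) := by
      conv_lhs => rw [← Finset.insert_erase (T.min'_mem hTne)]
      exact Finset.sort_insert _ (fun b hb => T.min'_le b (Finset.mem_of_mem_erase hb))
        (Finset.notMem_erase _ _)
    have hSmax' : ∀ h2 : (S.erase (S.min' hSne)).Nonempty, Even ((S.erase (S.min' hSne)).max' h2) := by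
      intro h2
      rw [max'_erase_min' S hSne h2]
      exact hSmax hSne
    have hTmax' : ∀ h2 : (T.erase (T.min' hTne)).Nonempty, Even ((T.erase (T.min' hTne)).max' h2) := by
      intro h2
      rw [max'_erase_min' T hTne h2]
      exact hTmax hTne
    have hScard' : (S.erase (S.min' hSne)).card = n := by
      rw [Finset.card_erase_of_mem (S.min'_mem hSne)]; omega
    have hTcard' : (T.erase (T.min' hTne)).card = n := by
      rw [Finset.card_erase_of_mem (T.min'_mem hTne)]; omega
    have hlam' : lambdaV (S.erase (S.min' hSne)) = lambdaV (T.erase (T.min' hTne)) := by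
      by_cases hev : Even (S.min' hSne)
      · rw [lambda_erase_even S hSne hev, lambda_erase_even T hTne (hparmin.mp hev), hlam]
      · have hoS : Odd (S.min' hSne) := Nat.not_even_iff_odd.mp hev
        have hoT : Odd (T.min' hTne) := Nat.not_even_iff_odd.mp (fun hh => hev (hparmin.mpr hh))
        rw [lambda_erase_odd S hSne hoS, lambda_erase_odd T hTne hoT, hlam]
    have htail := ih (S.erase (S.min' hSne)) (T.erase (T.min' hTne)) hScard' hTcard'
      hSmax' hTmax' hlam'
    rw [hsortS, hsortT, List.map_cons, List.map_cons, htail]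
    have hmod : S.min' hSne % 2 = T.min' hTne % 2 := by
      rw [Nat.even_iff, Nat.even_iff] at hparmin
      omega
    rw [hmod]

/-! ### Transport along a parity-preserving order isomorphism -/

lemma coe_eq_sup_iff {V : Finset ℕ} (h : V.Nonempty) (a : ↥V) :
    ((a : ℕ) = V.sup id) ↔ ∀ b : ↥V, b ≤ a := by
  constructor
  · intro ha b
    have hb : (b : ℕ) ≤ V.sup id := Finset.le_sup (f := id) b.2
    exact Subtype.coe_le_coe.mp (ha ▸ hb)
  · intro hall
    have h1 : (a : ℕ) ≤ V.sup id := Finset.le_sup (f := id) a.2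
    have h2 : V.sup id ≤ (a : ℕ) := Subtype.coe_le_coe.mpr (hall ⟨V.sup id, sup_id_mem V h⟩)
    omega

lemma le_sndEvenMax_iff {V : Finset ℕ} (hpos : ∀ x ∈ V, 0 < x) (a : ↥V) :
    ((a : ℕ) ≤ sndEvenMax V) ↔ ∃ b : ↥V, Even (b : ℕ) ∧ (b : ℕ) ≠ V.sup id ∧ a ≤ b := by
  unfold sndEvenMax
  constructor
  · intro hle
    rcases ((V.filter fun x => Even x).erase (V.sup id)).eq_empty_or_nonempty with hemp | hne
    · exfalso
      rw [hemp] at hle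
      have h0 : (a : ℕ) ≤ 0 := by simpa using hle
      have := hpos a a.2
      omega
    · have hmem := sup_id_mem _ hne
      rw [Finset.mem_erase, Finset.mem_filter] at hmem
      exact ⟨⟨_, hmem.2.1⟩, hmem.2.2, hmem.1, Subtype.coe_le_coe.mp hle⟩
  · rintro ⟨b, hbe, hbne, hab⟩
    have hbmem : (b : ℕ) ∈ (V.filter fun x => Even x).erase (V.sup id) := by
      rw [Finset.mem_erase, Finset.mem_filter]
      exact ⟨hbne, b.2, hbe⟩
    calc (a : ℕ) ≤ (b : ℕ) := Subtype.coe_le_coe.mpr hab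
      _ ≤ _ := Finset.le_sup (f := id) hbmem

lemma eq_nextEven_iff {V : Finset ℕ} {a c : ↥V}
    (hne : {b : ℕ | b ∈ V ∧ Even b ∧ (a : ℕ) < b}.Nonempty) :
    ((c : ℕ) = nextEven V (a : ℕ)) ↔
      (Even (c : ℕ) ∧ (a : ℕ) < (c : ℕ) ∧
        ∀ y : ↥V, Even (y : ℕ) → (a : ℕ) < (y : ℕ) → (c : ℕ) ≤ (y : ℕ)) := by
  unfold nextEven
  constructor
  · intro hc
    have hmem := Nat.sInf_mem hne
    rw [← hc] at hmem
    exact ⟨hmem.2.1, hmem.2.2, fun y hy hay => hc ▸ Nat.sInf_le ⟨y.2, hy, hay⟩⟩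
  · rintro ⟨hce, hac, hmin⟩
    have hmem := Nat.sInf_mem hne
    exact le_antisymm (hmin ⟨_, hmem.1⟩ hmem.2.1 hmem.2.2) (Nat.sInf_le ⟨c.2, hce, hac⟩)

lemma nextEven_set_nonempty {V : Finset ℕ} (hpos : ∀ x ∈ V, 0 < x) (a : ↥V)
    (ha : (a : ℕ) ≤ sndEvenMax V) (hodd : Odd (a : ℕ)) :
    {b : ℕ | b ∈ V ∧ Even b ∧ (a : ℕ) < b}.Nonempty := by
  obtain ⟨b, hbe, -, hab⟩ := (le_sndEvenMax_iff hpos a).mp ha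
  refine ⟨b, b.2, hbe, lt_of_le_of_ne (Subtype.coe_le_coe.mpr hab) ?_⟩
  intro h
  rw [← h] at hbe
  exact (Nat.not_odd_iff_even.mpr hbe) hodd

section Psi

variable {S T : Finset ℕ} (ψ : ↥S ≃o ↥T)
  (hpar : ∀ a : ↥S, ((ψ a : ℕ) % 2) = (a : ℕ) % 2)
  (hSne : S.Nonempty) (hTne : T.Nonempty)
  (hSpos : ∀ x ∈ S, 0 < x) (hTpos : ∀ x ∈ T, 0 < x)

include hpar in
lemma psi_even (a : ↥S) : Even ((ψ a : ℕ)) ↔ Even ((a : ℕ)) := by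
  rw [Nat.even_iff, Nat.even_iff, hpar]

include hpar in
lemma psi_odd (a : ↥S) : Odd ((ψ a : ℕ)) ↔ Odd ((a : ℕ)) := by
  rw [Nat.odd_iff, Nat.odd_iff, hpar]

include hSne hTne in
lemma psi_sup (a : ↥S) : ((ψ a : ℕ) = T.sup id) ↔ ((a : ℕ) = S.sup id) := by
  rw [coe_eq_sup_iff hTne, coe_eq_sup_iff hSne]
  constructor
  · intro hall b
    exact ψ.le_iff_le.mp (hall (ψ b))
  · intro hall b
    have := ψ.le_iff_le.mpr (hall (ψ.symm b))
    simpa using this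

include hpar hSne hTne hSpos hTpos in
lemma psi_sndEvenMax (a : ↥S) :
    ((ψ a : ℕ) ≤ sndEvenMax T) ↔ ((a : ℕ) ≤ sndEvenMax S) := by
  rw [le_sndEvenMax_iff hTpos, le_sndEvenMax_iff hSpos]
  constructor
  · rintro ⟨b, hbe, hbne, hab⟩
    refine ⟨ψ.symm b, ?_, ?_, ?_⟩
    · have := (psi_even ψ hpar (ψ.symm b)).mp (by simpa using hbe)
      exact this
    · intro hh
      apply hbne
      have := (psi_sup ψ hSne hTne (ψ.symm b)).mpr hh
      simpa using this
    · have h := (OrderIso.le_iff_le ψ.symm).mpr hab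
      simpa using h
  · rintro ⟨b, hbe, hbne, hab⟩
    exact ⟨ψ b, (psi_even ψ hpar b).mpr hbe,
      fun h => hbne ((psi_sup ψ hSne hTne b).mp h), ψ.le_iff_le.mpr hab⟩

include hpar hSne hTne hSpos hTpos in
lemma psi_nextEven {a c : ↥S} (ha : (a : ℕ) ≤ sndEvenMax S) (hodd : Odd ((a : ℕ))) :
    ((ψ c : ℕ) = nextEven T ((ψ a : ℕ))) ↔ ((c : ℕ) = nextEven S ((a : ℕ))) := by
  have hTa : ((ψ a : ℕ)) ≤ sndEvenMax T :=
    (psi_sndEvenMax ψ hpar hSne hTne hSpos hTpos a).mpr ha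
  have hToa : Odd ((ψ a : ℕ)) := (psi_odd ψ hpar a).mpr hodd
  have hneS := nextEven_set_nonempty hSpos a ha hodd
  have hneT := nextEven_set_nonempty hTpos (ψ a) hTa hToa
  rw [eq_nextEven_iff hneS, eq_nextEven_iff hneT]
  constructor
  · rintro ⟨h1, h2, h3⟩
    refine ⟨(psi_even ψ hpar c).mp h1, ?_, ?_⟩
    · have : ψ a < ψ c := Subtype.coe_lt_coe.mp h2
      exact Subtype.coe_lt_coe.mpr (ψ.lt_iff_lt.mp this)
    · intro y hy hay
      have := h3 (ψ y) ((psi_even ψ hpar y).mpr hy)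
        (Subtype.coe_lt_coe.mpr (ψ.lt_iff_lt.mpr (Subtype.coe_lt_coe.mp hay)))
      exact Subtype.coe_le_coe.mpr (ψ.le_iff_le.mp (Subtype.coe_le_coe.mp this))
  · rintro ⟨h1, h2, h3⟩
    refine ⟨(psi_even ψ hpar c).mpr h1, ?_, ?_⟩
    · exact Subtype.coe_lt_coe.mpr (ψ.lt_iff_lt.mpr (Subtype.coe_lt_coe.mp h2))
    · intro y hy hay
      have hy' : Even ((ψ.symm y : ℕ)) := by
        have := (psi_even ψ hpar (ψ.symm y)).mp (by simpa using hy)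
        exact this
      have hay' : (a : ℕ) < ((ψ.symm y : ℕ)) := by
        have h0 : ψ a < ψ (ψ.symm y) := by
          simpa using (Subtype.coe_lt_coe.mp hay : ψ a < y)
        exact Subtype.coe_lt_coe.mpr (ψ.lt_iff_lt.mp h0)
      have := h3 (ψ.symm y) hy' hay'
      have h4 : c ≤ ψ.symm y := Subtype.coe_le_coe.mp this
      have h5 : ψ c ≤ ψ (ψ.symm y) := ψ.le_iff_le.mpr h4
      simpa using (Subtype.coe_le_coe.mpr h5 : ((ψ c : ℕ)) ≤ ((ψ (ψ.symm y) : ℕ)))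

/-- conjugation of staircases by `ψ` -/
def conj (f : ↥S → ↥S) : ↥T → ↥T := fun b => ψ (f (ψ.symm b))

lemma conj_apply_psi (f : ↥S → ↥S) (a : ↥S) : conj ψ f (ψ a) = ψ (f a) := by
  simp [conj]

include hpar in
lemma conj_mem {f : ↥S → ↥S} (hf : f ∈ Staircases S) : conj ψ f ∈ Staircases T := by
  rw [Staircases, Finset.mem_filter] at hf ⊢
  obtain ⟨-, h1, h2⟩ := hf
  refine ⟨Finset.mem_univ _, fun b => ?_, fun b hb => ?_⟩
  · constructor
    · have := (h1 (ψ.symm b)).1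
      have h5 : ψ (ψ.symm b) ≤ ψ (f (ψ.symm b)) := ψ.le_iff_le.mpr (Subtype.coe_le_coe.mp this)
      have h6 := Subtype.coe_le_coe.mpr h5
      simpa [conj] using h6
    · have := (h1 (ψ.symm b)).2
      exact (psi_even ψ hpar _).mpr this
  · have hb' : Even ((ψ.symm b : ℕ)) := by
      have := (psi_even ψ hpar (ψ.symm b))
      rw [show ψ (ψ.symm b) = b from by simp] at this
      exact this.mp hb
    obtain ⟨a, ha⟩ := h2 (ψ.symm b) hb'
    exact ⟨ψ a, by simp [conj, ha]⟩

include hpar hSne hTne hSpos hTpos in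
lemma moS_conj (f : ↥S → ↥S) : moS S f = moS T (conj ψ f) := by
  rw [moS, moS]
  apply Finset.card_equiv ψ.toEquiv
  intro a
  simp only [Finset.mem_filter, Finset.mem_univ, true_and]
  rw [show (ψ.toEquiv a) = ψ a from rfl, conj_apply_psi]
  exact and_congr (psi_sndEvenMax ψ hpar hSne hTne hSpos hTpos a).symm
    (and_congr (psi_odd ψ hpar a).symm (psi_sup ψ hSne hTne (f a)).symm)

include hpar hSne hTne hSpos hTpos in
lemma meS_conj (f : ↥S → ↥S) : meS S f = meS T (conj ψ f) := by
  rw [meS, meS]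
  apply Finset.card_equiv ψ.toEquiv
  intro a
  simp only [Finset.mem_filter, Finset.mem_univ, true_and]
  rw [show (ψ.toEquiv a) = ψ a from rfl, conj_apply_psi]
  exact and_congr (psi_sndEvenMax ψ hpar hSne hTne hSpos hTpos a).symm
    (and_congr (psi_even ψ hpar a).symm (psi_sup ψ hSne hTne (f a)).symm)

include hpar hSne hTne hSpos hTpos in
lemma isFixedPt_conj (f : ↥S → ↥S) (a : ↥S) :
    IsFixedPtS S f a ↔ IsFixedPtS T (conj ψ f) (ψ a) := by
  rw [IsFixedPtS, IsFixedPtS, conj_apply_psi]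
  exact and_congr (psi_sndEvenMax ψ hpar hSne hTne hSpos hTpos a).symm
    (and_congr (psi_even ψ hpar a).symm ⟨fun h => congrArg ψ h, fun h => ψ.injective h⟩)

include hpar hSne hTne hSpos hTpos in
lemma fiS_conj (f : ↥S → ↥S) : fiS S f = fiS T (conj ψ f) := by
  rw [fiS, fiS]
  apply Finset.card_equiv ψ.toEquiv
  intro a
  simp only [Finset.mem_filter, Finset.mem_univ, true_and]
  rw [show (ψ.toEquiv a) = ψ a from rfl]
  apply and_congr (isFixedPt_conj ψ hpar hSne hTne hSpos hTpos f a)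
  constructor
  · intro H b hb
    have hb' : f (ψ.symm b) = a := by
      apply ψ.injective
      rw [show conj ψ f b = ψ (f (ψ.symm b)) from rfl] at hb
      exact hb
    have := H (ψ.symm b) hb'
    rw [← this]
    simp
  · intro H b hb
    have := H (ψ b) (by rw [conj_apply_psi, hb])
    simpa using congrArg ψ.symm this

include hpar hSne hTne hSpos hTpos in
lemma fdS_conj (f : ↥S → ↥S) : fdS S f = fdS T (conj ψ f) := by
  rw [fdS, fdS]
  apply Finset.card_equiv ψ.toEquiv
  intro a
  simp only [Finset.mem_filter, Finset.mem_univ, true_and]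
  rw [show (ψ.toEquiv a) = ψ a from rfl]
  apply and_congr (isFixedPt_conj ψ hpar hSne hTne hSpos hTpos f a)
  constructor
  · rintro ⟨b, hbne, hb⟩
    exact ⟨ψ b, fun h => hbne (ψ.injective h), by rw [conj_apply_psi, hb]⟩
  · rintro ⟨b, hbne, hb⟩
    refine ⟨ψ.symm b, fun h => hbne ?_, ?_⟩
    · rw [← h]; simp
    · apply ψ.injective
      rw [show conj ψ f b = ψ (f (ψ.symm b)) from rfl] at hb
      simpa using hb

include hpar hSne hTne hSpos hTpos in
lemma isSurfixedPt_conj (f : ↥S → ↥S) (a : ↥S) :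
    IsSurfixedPtS S f a ↔ IsSurfixedPtS T (conj ψ f) (ψ a) := by
  rw [IsSurfixedPtS, IsSurfixedPtS, conj_apply_psi]
  constructor
  · rintro ⟨h1, h2, h3⟩
    exact ⟨(psi_sndEvenMax ψ hpar hSne hTne hSpos hTpos a).mpr h1,
      (psi_odd ψ hpar a).mpr h2,
      (psi_nextEven ψ hpar hSne hTne hSpos hTpos h1 h2).mpr h3⟩
  · rintro ⟨h1, h2, h3⟩
    have h1' := (psi_sndEvenMax ψ hpar hSne hTne hSpos hTpos a).mp h1
    have h2' := (psi_odd ψ hpar a).mp h2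
    exact ⟨h1', h2', (psi_nextEven ψ hpar hSne hTne hSpos hTpos h1' h2').mp h3⟩

include hpar hSne hTne hSpos hTpos in
lemma siS_conj (f : ↥S → ↥S) : siS S f = siS T (conj ψ f) := by
  rw [siS, siS]
  apply Finset.card_equiv ψ.toEquiv
  intro a
  simp only [Finset.mem_filter, Finset.mem_univ, true_and]
  rw [show (ψ.toEquiv a) = ψ a from rfl]
  apply and_congr (isSurfixedPt_conj ψ hpar hSne hTne hSpos hTpos f a)
  rw [conj_apply_psi]
  constructor
  · intro H b hb
    have hb' : f (ψ.symm b) = f a := by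
      apply ψ.injective
      rw [show conj ψ f b = ψ (f (ψ.symm b)) from rfl] at hb
      exact hb
    have := H (ψ.symm b) hb'
    rw [← this]; simp
  · intro H b hb
    have := H (ψ b) (by rw [conj_apply_psi]; exact congrArg ψ hb)
    simpa using congrArg ψ.symm this

include hpar hSne hTne hSpos hTpos in
lemma sdS_conj (f : ↥S → ↥S) : sdS S f = sdS T (conj ψ f) := by
  rw [sdS, sdS]
  apply Finset.card_equiv ψ.toEquiv
  intro a
  simp only [Finset.mem_filter, Finset.mem_univ, true_and]
  rw [show (ψ.toEquiv a) = ψ a from rfl]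
  apply and_congr (isSurfixedPt_conj ψ hpar hSne hTne hSpos hTpos f a)
  rw [conj_apply_psi]
  constructor
  · rintro ⟨b, hbne, hb⟩
    exact ⟨ψ b, fun h => hbne (ψ.injective h), by rw [conj_apply_psi]; exact congrArg ψ hb⟩
  · rintro ⟨b, hbne, hb⟩
    refine ⟨ψ.symm b, fun h => hbne ?_, ?_⟩
    · rw [← h]; simp
    · apply ψ.injective
      rw [show conj ψ f b = ψ (f (ψ.symm b)) from rfl] at hb
      simpa using hb

include hpar hSne hTne hSpos hTpos in
lemma Lam_conj (R : Type) [CommRing R] (x y z xb yb zb : R) :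
    Lam R S x y z xb yb zb = Lam R T x y z xb yb zb := by
  rw [Lam, Lam]
  apply Finset.sum_nbij' (i := conj ψ) (j := conj ψ.symm)
  · intro f hf
    exact conj_mem ψ hpar hf
  · intro g hg
    have hpar' : ∀ b : ↥T, ((ψ.symm b : ℕ) % 2) = (b : ℕ) % 2 := by
      intro b
      have := hpar (ψ.symm b)
      rw [show ψ (ψ.symm b) = b from by simp] at this
      exact this.symm
    exact conj_mem ψ.symm hpar' hg
  · intro f _
    funext a
    simp [conj]
  · intro g _
    funext b
    simp [conj]
  · intro f _
    rw [← moS_conj ψ hpar hSne hTne hSpos hTpos f,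
      ← meS_conj ψ hpar hSne hTne hSpos hTpos f,
      ← fiS_conj ψ hpar hSne hTne hSpos hTpos f,
      ← fdS_conj ψ hpar hSne hTne hSpos hTpos f,
      ← siS_conj ψ hpar hSne hTne hSpos hTpos f,
      ← sdS_conj ψ hpar hSne hTne hSpos hTpos f]

end Psi

end DumontAux

open MvPolynomial in
/-- If `S` and `T` are finite sets of positive integers with even maxima and
`λ(S) = λ(T)`, then `Λ_S = Λ_T` as polynomials in the six variables. -/
theorem lam_eq_of_lambda_eq (S T : Finset ℕ) (hSne : S.Nonempty) (hTne : T.Nonempty)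
    (hSpos : ∀ a ∈ S, 0 < a) (hTpos : ∀ a ∈ T, 0 < a)
    (hSmax : Even (S.max' hSne)) (hTmax : Even (T.max' hTne))
    (hlam : lambdaV S = lambdaV T) :
    Lam (MvPolynomial (Fin 6) ℤ) S (X 0) (X 1) (X 2) (X 3) (X 4) (X 5) =
    Lam (MvPolynomial (Fin 6) ℤ) T (X 0) (X 1) (X 2) (X 3) (X 4) (X 5) := by
  classical
  have hcard : T.card = S.card := by
    rw [DumontAux.card_eq_lambda S hSne hSmax, DumontAux.card_eq_lambda T hTne hTmax, hlam]
  have hplist := DumontAux.parity_sort_eq S.card S T rfl hcard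
    (fun _ => hSmax) (fun _ => hTmax) hlam
  let e1 : Fin S.card ≃o ↥S := S.orderIsoOfFin rfl
  let e2 : Fin S.card ≃o ↥T := T.orderIsoOfFin hcard
  let ψ : ↥S ≃o ↥T := e1.symm.trans e2
  have hpar : ∀ a : ↥S, ((ψ a : ℕ) % 2) = (a : ℕ) % 2 := by
    intro a
    set i : Fin S.card := e1.symm a with hi
    have haS : (a : ℕ) = (S.sort (· ≤ ·))[(i : ℕ)]'(by
        rw [Finset.length_sort]; exact i.isLt) := by
      have : a = e1 i := by rw [hi]; simp
      rw [this]
      rfl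
    have haT : (ψ a : ℕ) = (T.sort (· ≤ ·))[(i : ℕ)]'(by
        rw [Finset.length_sort, hcard]; exact i.isLt) := by
      have : ψ a = e2 i := rfl
      rw [this]
      rfl
    have hgl : ((S.sort (· ≤ ·)).map (· % 2))[(i : ℕ)]'(by
          rw [List.length_map, Finset.length_sort]; exact i.isLt) =
        ((T.sort (· ≤ ·)).map (· % 2))[(i : ℕ)]'(by
          rw [List.length_map, Finset.length_sort, hcard]; exact i.isLt) := by
      congr 1
    rw [List.getElem_map, List.getElem_map] at hgl
    rw [haS, haT]
    exact hgl.symm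
  exact DumontAux.Lam_conj ψ hpar hSne hTne hSpos hTpos _ _ _ _ _ _ _

end
end

section
/- For any finite set V of positive integers with even maximum and any k >= 1, the sum over D-permutations sigma of V of t^{c(sigma)} (where c(sigma) is the number of cycles of sigma) equals Lambda_{V ∪ R_k}(t, t, 1, 0, t, 1), where R_k consists of k odd numbers exceeding max V together with one even number exceeding those. -/
attribute [local instance] Classical.propDecidable

noncomputable section

/-- D-permutations of `V`. -/
def DPerms (V : Finset ℕ) : Finset (Equiv.Perm ↥V) :=
  Finset.univ.filter fun σ => ∀ a : ↥V,
    (Odd (a : ℕ) → (a : ℕ) ≤ ((σ a : ℕ))) ∧ (Even (a : ℕ) → ((σ a : ℕ)) ≤ (a : ℕ))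

/-- The number of cycles (orbits, including fixed points) of a permutation of `↥V`. -/
def cycCount {V : Finset ℕ} (σ : Equiv.Perm ↥V) : ℕ :=
  (Finset.univ.image fun a : ↥V => Finset.univ.filter fun b => σ.SameCycle a b).card

/-!
At `(t, t, 1, 0, t, 1)` the polynomial `Λ` discards the staircases having an even maximum. In the
remaining ones everything above the second even maximum goes to the top, and recording an odd
element sent to the top as a fixed point turns `mo + fd + fi` into the number of fixed points. So
`Λ` becomes a sum of `t ^ (fixed points)` over staircases on `V` with a top element.

This sum and `∑ t ^ c(σ)` satisfy the same recursion, obtained by deleting the smallest element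
`m`, once the conditions are waived on a set `F` of even elements. A permutation is recorded by
the preimage `u` of `m` together with the permutation obtained by cutting `m` out of its cycle; a
staircase by its value `u` at `m` together with its restriction. The choice `u = m` accounts for
one cycle, respectively one fixed point, and `u ≠ m` is possible exactly when `u` is even and `m`
is odd or waived, after which `u` itself is waived. Cycles are counted through invariant
colourings: a permutation with `c` cycles has `2 ^ c` invariant `Bool`-colourings.
-/

open Finset Equiv

section Cycles

variable {α β : Type*}

theorem Equiv.Perm.SameCycle.apply_eq_of_invariant [Finite α] {σ : Perm α} {c : α → β}
    (hc : ∀ a, c (σ a) = c a) {a b : α} (h : σ.SameCycle a b) : c a = c b := by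
  obtain ⟨n, -, rfl⟩ := h.exists_pow_eq'
  clear h
  induction n with
  | zero => rfl
  | succ n ih => rw [pow_succ', Perm.mul_apply, hc, ih]

variable [Fintype α] [DecidableEq α]

/-- `cycCount` for an arbitrary finite type; the two agree definitionally on `↥V`. -/
def numCycles (σ : Perm α) : ℕ :=
  (univ.image fun a => univ.filter fun b => σ.SameCycle a b).card

theorem card_invariant_colorings [Fintype β] (σ : Perm α) :
    Fintype.card {c : α → β // ∀ a, c (σ a) = c a} = Fintype.card β ^ numCycles σ := by
  set orbit : α → Finset α := fun a => univ.filter fun b => σ.SameCycle a b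
  have orbit_eq_iff : ∀ a b, orbit a = orbit b ↔ σ.SameCycle a b := by
    refine fun a b => ⟨fun h => ?_, fun h => ?_⟩
    · have hb : b ∈ orbit b := by simpa [orbit] using Perm.SameCycle.refl σ b
      rw [← h] at hb
      simpa [orbit] using hb
    · ext x
      simp only [orbit, mem_filter, mem_univ, true_and]
      exact ⟨h.symm.trans, h.trans⟩
  have hrep : ∀ C : ↥(univ.image orbit), ∃ a, orbit a = C := fun C => by
    obtain ⟨a, -, h⟩ := mem_image.1 C.2
    exact ⟨a, h⟩
  let e : {c : α → β // ∀ a, c (σ a) = c a} ≃ (↥(univ.image orbit) → β) :=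
    { toFun := fun c C => c.1 (hrep C).choose
      invFun := fun g => ⟨fun a => g ⟨orbit a, mem_image_of_mem _ (mem_univ a)⟩, fun a =>
        congrArg g (Subtype.ext ((orbit_eq_iff _ _).2 (Perm.sameCycle_apply_left.2 (.refl _ _))))⟩
      left_inv := fun c => Subtype.ext <| funext fun _ =>
        ((orbit_eq_iff _ _).1 (hrep _).choose_spec).apply_eq_of_invariant c.2
      right_inv := fun g => funext fun C => congrArg g (Subtype.ext (hrep C).choose_spec) }
  rw [Fintype.card_congr e, Fintype.card_fun, Fintype.card_coe]
  rfl

end Cycles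

section Insertion

variable {α β : Type*} [DecidableEq α] {m : α}

/-- Inserts `m` into the cycle of `σ'` right after `u`, or as a fixed point if `u = m`. -/
def insertPerm (σ' : Perm {x // x ≠ m}) (u : α) : Perm α :=
  Perm.ofSubtype σ' * swap m u

theorem insertPerm_apply_self (σ' : Perm {x // x ≠ m}) (u : α) : insertPerm σ' u u = m := by
  simp [insertPerm, Perm.ofSubtype_apply_of_not_mem]

theorem insertPerm_apply_coe (σ' : Perm {x // x ≠ m}) {u : α} (a : {x // x ≠ m})
    (ha : (a : α) ≠ u) : insertPerm σ' u a = σ' a := by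
  simp [insertPerm, swap_apply_of_ne_of_ne a.2 ha]

theorem insertPerm_apply_inserted (σ' : Perm {x // x ≠ m}) {u : α} (hu : u ≠ m) :
    insertPerm σ' u m = σ' ⟨u, hu⟩ := by
  rw [insertPerm, Perm.mul_apply, swap_apply_left]
  exact Perm.ofSubtype_apply_of_mem σ' hu

def deletePerm (σ : Perm α) : Perm {x // x ≠ m} :=
  (σ * swap m (σ.symm m)).subtypePerm fun _ => (Equiv.injective _).ne_iff' (by simp)

def insertEquiv : α × Perm {x // x ≠ m} ≃ Perm α where
  toFun p := insertPerm p.2 p.1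
  invFun σ := (σ.symm m, deletePerm σ)
  left_inv := fun ⟨u, σ'⟩ => by
    have hu : (insertPerm σ' u).symm m = u := by
      rw [Equiv.symm_apply_eq, insertPerm_apply_self]
    refine Prod.ext hu (Equiv.ext fun a => Subtype.ext ?_)
    simp only [deletePerm, Perm.subtypePerm_apply, hu]
    simp [insertPerm]
  right_inv σ := by
    simp only [insertPerm, deletePerm]
    rw [Perm.ofSubtype_subtypePerm, mul_swap_mul_self]
    rintro x hx rfl
    simp at hx

theorem insertPerm_invariant_iff (σ' : Perm {x // x ≠ m}) (u : α) (c : α → β) :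
    (∀ x, c (insertPerm σ' u x) = c x) ↔ (∀ a, c (σ' a) = c a) ∧ c u = c m := by
  constructor
  · intro h
    have hu : c u = c m := by rw [← h u, insertPerm_apply_self]
    refine ⟨fun a => ?_, hu⟩
    by_cases ha : (a : α) = u
    · subst ha
      rw [hu, ← h m, insertPerm_apply_inserted σ' a.2]
    · rw [← h a, insertPerm_apply_coe σ' a ha]
  · rintro ⟨h, hu⟩ x
    by_cases hxu : x = u
    · rw [hxu, insertPerm_apply_self, hu]
    by_cases hxm : x = m
    · subst hxm
      rw [insertPerm_apply_inserted σ' (Ne.symm hxu), h, ← hu]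
    · exact (insertPerm_apply_coe σ' ⟨x, hxm⟩ hxu).symm ▸ h ⟨x, hxm⟩

theorem card_invariant_insertPerm [Fintype α] [Fintype β] (σ' : Perm {x // x ≠ m}) (u : α) :
    Fintype.card {c : α → β // ∀ x, c (insertPerm σ' u x) = c x} =
      (if u = m then Fintype.card β else 1) *
        Fintype.card {c : {x // x ≠ m} → β // ∀ a, c (σ' a) = c a} := by
  rw [Fintype.card_congr (Equiv.subtypeEquivRight (insertPerm_invariant_iff σ' u))]
  split_ifs with hu
  · subst hu
    rw [← Fintype.card_prod]
    refine Fintype.card_congr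
      { toFun := fun c => (c.1 u, ⟨fun a => c.1 a, c.2.1⟩)
        invFun := fun p => ⟨(funSplitAt u β).symm (p.1, p.2.1),
          fun a => by simpa [a.2, (σ' a).2] using p.2.2 a, rfl⟩
        left_inv := fun c => Subtype.ext ((funSplitAt u β).symm_apply_apply c.1)
        right_inv := fun p => Prod.ext (by simp) (Subtype.ext (funext fun a => by simp [a.2])) }
  · rw [one_mul]
    refine Fintype.card_congr
      { toFun := fun c => ⟨fun a => c.1 a, c.2.1⟩
        invFun := fun c => ⟨(funSplitAt m β).symm (c.1 ⟨u, hu⟩, c.1),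
          fun a => by simpa [a.2, (σ' a).2] using c.2 a, by simp [hu]⟩
        left_inv := fun c => Subtype.ext ?_
        right_inv := fun c => Subtype.ext (funext fun a => by simp [a.2]) }
    rw [← (funSplitAt m β).symm_apply_apply c.1]
    simp [c.2.2]

theorem numCycles_insertPerm [Fintype α] (σ' : Perm {x // x ≠ m}) (u : α) :
    numCycles (insertPerm σ' u) = numCycles σ' + if u = m then 1 else 0 := by
  have h := card_invariant_insertPerm (β := Bool) σ' u
  rw [card_invariant_colorings, card_invariant_colorings, Fintype.card_bool] at h
  refine Nat.pow_right_injective le_rfl (h.trans ?_)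
  split_ifs <;> ring

end Insertion

section Extension

variable {α : Type*} [DecidableEq α] {m : α}

def extendMap (u : α) (b' : {x // x ≠ m} → {x // x ≠ m}) (x : α) : α :=
  if h : x = m then u else b' ⟨x, h⟩

def restrictMap (b : α → α) (a : {x // x ≠ m}) : {x // x ≠ m} :=
  if h : b a = m then a else ⟨b a, h⟩

@[simp] theorem extendMap_apply_self (u : α) (b' : {x // x ≠ m} → {x // x ≠ m}) :
    extendMap u b' m = u :=
  dif_pos rfl

@[simp] theorem extendMap_apply_coe (u : α) (b' : {x // x ≠ m} → {x // x ≠ m})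
    (a : {x // x ≠ m}) : extendMap u b' a = b' a :=
  dif_neg a.2

@[simp] theorem restrictMap_extendMap (u : α) (b' : {x // x ≠ m} → {x // x ≠ m}) :
    restrictMap (extendMap u b') = b' :=
  funext fun a => by simp [restrictMap, (b' a).2]

theorem extendMap_restrictMap {b : α → α} (hb : ∀ x ≠ m, b x ≠ m) :
    extendMap (b m) (restrictMap (m := m) b) = b := by
  funext x
  by_cases hx : x = m
  · subst hx
    simp
  · simp [extendMap, restrictMap, hx, hb x hx]

def fixCount [Fintype α] (b : α → α) : ℕ := #{a | b a = a}

theorem fixCount_extendMap [Fintype α] (u : α) (b' : {x // x ≠ m} → {x // x ≠ m}) :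
    fixCount (extendMap u b') = fixCount b' + if u = m then 1 else 0 := by
  simp only [fixCount, card_filter, Fintype.sum_eq_add_sum_subtype_ne _ m, extendMap_apply_self,
    extendMap_apply_coe, Subtype.coe_inj]
  rw [add_comm]

end Extension

section Recursion

variable {α : Type*} {ℓ : α → ℕ} {F : Set α} {m : α}

variable (ℓ) in
/-- D-permutations for the labelling `ℓ`, with the condition waived on `F`. -/
def IsDPermOff (F : Set α) (σ : Perm α) : Prop :=
  ∀ a ∉ F, (Odd (ℓ a) → ℓ a ≤ ℓ (σ a)) ∧ (Even (ℓ a) → ℓ (σ a) ≤ ℓ a)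

variable (ℓ) in
/-- A staircase on `α` with an extra top element: an odd fixed point `a` stands for `a ↦ top`.
Surjectivity onto the even elements is waived on `F`. -/
def IsCappedStaircaseOff (F : Set α) (b : α → α) : Prop :=
  (∀ a, ℓ a ≤ ℓ (b a)) ∧ (∀ a, Odd (ℓ (b a)) → b a = a) ∧ ∀ e ∉ F, Even (ℓ e) → ∃ a, b a = e

variable (ℓ) in
/-- The possible preimages (for permutations) or images (for staircases) `u` of the
minimum `m`. -/
def Admissible (F : Set α) (m u : α) : Prop :=
  u = m ∨ Even (ℓ u) ∧ (m ∈ F ∨ Odd (ℓ m))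

theorem isDPermOff_insertPerm_iff [DecidableEq α] (hmin : ∀ x ≠ m, ℓ m < ℓ x)
    (hF : ∀ u ∈ F, Even (ℓ u)) (σ' : Perm {x // x ≠ m}) (u : α) :
    IsDPermOff ℓ F (insertPerm σ' u) ↔
      Admissible ℓ F m u ∧ IsDPermOff (ℓ ∘ (↑)) ((↑) ⁻¹' insert u F) σ' := by
  have hle : ∀ x, ℓ m ≤ ℓ x := fun x => by
    rcases eq_or_ne x m with rfl | hx
    exacts [le_rfl, (hmin x hx).le]
  constructor
  · intro h
    refine ⟨?_, fun a ha => ?_⟩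
    · rcases eq_or_ne u m with hu | hu
      · exact .inl hu
      have hu_even : Even (ℓ u) := by
        by_cases huF : u ∈ F
        · exact hF u huF
        rw [← Nat.not_odd_iff_even]
        intro hodd
        have := (h u huF).1 hodd
        rw [insertPerm_apply_self] at this
        exact (hmin u hu).not_ge this
      refine .inr ⟨hu_even, ?_⟩
      by_contra! hm
      have := (h m hm.1).2 (Nat.not_odd_iff_even.1 hm.2)
      rw [insertPerm_apply_inserted σ' hu] at this
      exact (hmin _ (σ' _).2).not_ge this
    · simp only [Set.mem_preimage, Set.mem_insert_iff, not_or] at ha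
      simpa [insertPerm_apply_coe σ' a ha.1] using h a ha.2
  · rintro ⟨hu, h'⟩ a ha
    rcases eq_or_ne a m with rfl | ham
    · refine ⟨fun _ => hle _, fun heven => ?_⟩
      obtain rfl : u = a := hu.resolve_right fun ⟨_, h⟩ =>
        h.elim ha (Nat.not_odd_iff_even.2 heven)
      rw [insertPerm_apply_self]
    rcases eq_or_ne a u with rfl | hau
    · rw [insertPerm_apply_self]
      have := (hu.resolve_left ham).1
      exact ⟨fun hodd => absurd this (Nat.not_even_iff_odd.2 hodd), fun _ => hle a⟩
    · simpa [insertPerm_apply_coe σ' ⟨a, ham⟩ hau] using h' ⟨a, ham⟩ (by simp [hau, ha])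

theorem IsCappedStaircaseOff.apply_ne (hmin : ∀ x ≠ m, ℓ m < ℓ x) {b : α → α}
    (hb : IsCappedStaircaseOff ℓ F b) : ∀ x ≠ m, b x ≠ m :=
  fun x hx h => (hmin x hx).not_ge (h ▸ hb.1 x)

theorem isCappedStaircaseOff_extendMap_iff [DecidableEq α] (hmin : ∀ x ≠ m, ℓ m < ℓ x)
    (b' : {x // x ≠ m} → {x // x ≠ m}) (u : α) :
    IsCappedStaircaseOff ℓ F (extendMap u b') ↔
      Admissible ℓ F m u ∧ IsCappedStaircaseOff (ℓ ∘ (↑)) ((↑) ⁻¹' insert u F) b' := by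
  constructor
  · rintro ⟨h1, h2, h3⟩
    refine ⟨?_, fun a => by simpa using h1 a,
      fun a ha => Subtype.ext (by simpa using h2 a (by simpa using ha)), fun e he heven => ?_⟩
    · rcases eq_or_ne u m with hu | hu
      · exact .inl hu
      have hu_even : Even (ℓ u) := by
        rw [← Nat.not_odd_iff_even]
        intro hodd
        exact hu (by simpa using h2 m (by simpa using hodd))
      refine .inr ⟨hu_even, ?_⟩
      by_contra! hm
      obtain ⟨a, ha⟩ := h3 m hm.1 (Nat.not_odd_iff_even.1 hm.2)
      rcases eq_or_ne a m with rfl | ham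
      · exact hu (by simpa using ha)
      · exact (b' ⟨a, ham⟩).2 (by simpa [extendMap, ham] using ha)
    · simp only [Set.mem_preimage, Set.mem_insert_iff, not_or] at he
      obtain ⟨a, ha⟩ := h3 e he.2 heven
      rcases eq_or_ne a m with rfl | ham
      · exact absurd (by simpa using ha.symm) he.1
      · exact ⟨⟨a, ham⟩, Subtype.ext (by simpa [extendMap, ham] using ha)⟩
  · rintro ⟨hu, h1, h2, h3⟩
    refine ⟨fun x => ?_, fun x hx => ?_, fun e he heven => ?_⟩
    · rcases eq_or_ne x m with rfl | hxm
      · rcases eq_or_ne u x with rfl | hux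
        exacts [by simp, by simpa using (hmin u hux).le]
      · simpa [extendMap, hxm] using h1 ⟨x, hxm⟩
    · rcases eq_or_ne x m with rfl | hxm
      · simp only [extendMap_apply_self] at hx ⊢
        exact hu.resolve_right fun ⟨h, _⟩ => Nat.not_even_iff_odd.2 hx h
      · have := h2 ⟨x, hxm⟩ (by simpa [extendMap, hxm] using hx)
        simpa [extendMap, hxm] using congrArg Subtype.val this
    · rcases eq_or_ne e m with rfl | hem
      · refine ⟨e, ?_⟩
        simpa using hu.resolve_right fun ⟨_, h⟩ => h.elim he (Nat.not_odd_iff_even.2 heven)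
      rcases eq_or_ne e u with rfl | heu
      · exact ⟨m, by simp⟩
      obtain ⟨a, ha⟩ := h3 ⟨e, hem⟩ (by simp [heu, he]) heven
      exact ⟨a, by simp [ha]⟩

variable {R : Type*} [CommSemiring R]

theorem sum_filter_prod_pow {γ : Type*} [Fintype α] [DecidableEq α] [Fintype γ] (t : R)
    (A : α → Prop) (P : α → γ → Prop) (w : γ → ℕ) (m : α) :
    ∑ p : α × γ with A p.1 ∧ P p.1 p.2, t ^ (w p.2 + if p.1 = m then 1 else 0) =
      ∑ u with A u, t ^ (if u = m then 1 else 0) * ∑ c with P u c, t ^ w c := by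
  rw [sum_finset_product _ (univ.filter A) (fun u => univ.filter (P u)) (fun p => by simp)]
  simp_rw [mul_sum, pow_add, mul_comm]

variable [Fintype α] [DecidableEq α]

variable (ℓ) in
def dPermSum (t : R) (F : Set α) : R :=
  ∑ σ : Perm α with IsDPermOff ℓ F σ, t ^ numCycles σ

variable (ℓ) in
def cappedStaircaseSum (t : R) (F : Set α) : R :=
  ∑ b : α → α with IsCappedStaircaseOff ℓ F b, t ^ fixCount b

theorem dPermSum_eq_sum_admissible (hmin : ∀ x ≠ m, ℓ m < ℓ x) (hF : ∀ u ∈ F, Even (ℓ u))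
    (t : R) :
    dPermSum ℓ t F = ∑ u with Admissible ℓ F m u,
      t ^ (if u = m then 1 else 0) *
        dPermSum (ℓ ∘ (↑) : {x // x ≠ m} → ℕ) t ((↑) ⁻¹' insert u F) := by
  unfold dPermSum
  rw [← sum_filter_prod_pow (γ := Perm {x // x ≠ m}) t (Admissible ℓ F m)
    (fun u σ' => IsDPermOff (ℓ ∘ (↑)) ((↑) ⁻¹' insert u F) σ') numCycles m]
  refine (sum_equiv insertEquiv (fun p => ?_) (fun p _ => ?_)).symm
  · simp [insertEquiv, isDPermOff_insertPerm_iff hmin hF]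
  · simp [insertEquiv, numCycles_insertPerm]

theorem cappedStaircaseSum_eq_sum_admissible (hmin : ∀ x ≠ m, ℓ m < ℓ x) (t : R) :
    cappedStaircaseSum ℓ t F = ∑ u with Admissible ℓ F m u,
      t ^ (if u = m then 1 else 0) *
        cappedStaircaseSum (ℓ ∘ (↑) : {x // x ≠ m} → ℕ) t ((↑) ⁻¹' insert u F) := by
  unfold cappedStaircaseSum
  rw [← sum_filter_prod_pow (γ := {x // x ≠ m} → {x // x ≠ m}) t (Admissible ℓ F m)
    (fun u b' => IsCappedStaircaseOff (ℓ ∘ (↑)) ((↑) ⁻¹' insert u F) b') fixCount m]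
  refine (sum_nbij' (fun p => extendMap p.1 p.2) (fun b => (b m, restrictMap b))
    (fun p hp => ?_) (fun b hb => ?_) (fun p _ => ?_) (fun b hb => ?_) (fun p _ => ?_)).symm
  · simpa [isCappedStaircaseOff_extendMap_iff hmin] using hp
  · simp only [mem_filter, mem_univ, true_and] at hb ⊢
    rw [← isCappedStaircaseOff_extendMap_iff hmin, extendMap_restrictMap (hb.apply_ne hmin)]
    exact hb
  · simp
  · exact extendMap_restrictMap ((mem_filter.1 hb).2.apply_ne hmin)
  · simp [fixCount_extendMap]

theorem dPermSum_eq_cappedStaircaseSum {α : Type*} [Fintype α] [DecidableEq α] {ℓ : α → ℕ}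
    (hℓ : Function.Injective ℓ) {F : Set α} (hF : ∀ u ∈ F, Even (ℓ u)) (t : R) :
    dPermSum ℓ t F = cappedStaircaseSum ℓ t F := by
  induction hn : Fintype.card α generalizing α with
  | zero =>
    have : IsEmpty α := Fintype.card_eq_zero_iff.1 hn
    simp [dPermSum, cappedStaircaseSum, IsDPermOff, IsCappedStaircaseOff, numCycles, fixCount]
  | succ n ih =>
    have : Nonempty α := Fintype.card_pos_iff.1 (hn ▸ n.succ_pos)
    obtain ⟨m, hm⟩ := Finite.exists_min ℓ
    have hmin : ∀ x ≠ m, ℓ m < ℓ x := fun x hx => (hm x).lt_of_ne (hℓ.ne hx.symm)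
    rw [dPermSum_eq_sum_admissible hmin hF, cappedStaircaseSum_eq_sum_admissible hmin]
    refine sum_congr rfl fun u hu => ?_
    rw [ih (hℓ.comp Subtype.val_injective) ?_ ?_]
    · rintro a (rfl | ha)
      · simpa using ((mem_filter.1 hu).2.resolve_left a.2).1
      · exact hF a ha
    · rw [Fintype.card_subtype_compl, Fintype.card_subtype_eq, hn, Nat.add_sub_cancel]

end Recursion
section Staircases

variable {S : Finset ℕ}

theorem sup_id_mem_of_pos (h : 0 < S.sup id) : S.sup id ∈ S := by
  obtain ⟨x, hx, hxM⟩ := exists_mem_eq_sup S (nonempty_of_ne_empty (by rintro rfl; simp at h)) id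
  exact hxM ▸ hx

theorem sndEvenMax_lt (h : 0 < S.sup id) : sndEvenMax S < S.sup id :=
  (Finset.sup_lt_iff h).2 fun x hx =>
    (le_sup (f := id) (mem_of_mem_filter x (mem_of_mem_erase hx))).lt_of_ne (ne_of_mem_erase hx)

theorem le_sndEvenMax {x : ℕ} (hx : x ∈ S) (he : Even x) (hxM : x ≠ S.sup id) :
    x ≤ sndEvenMax S :=
  le_sup (f := id) (mem_erase.2 ⟨hxM, mem_filter.2 ⟨hx, he⟩⟩)

def ofSprime (a : ↥(Sprime S)) : ↥S := ⟨a, (mem_filter.1 a.2).1⟩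

@[simp] theorem coe_ofSprime (a : ↥(Sprime S)) : (ofSprime a : ℕ) = a := rfl

theorem card_filter_le_sndEvenMax (P : ↥S → Prop) [DecidablePred P] :
    #{x : ↥S | (x : ℕ) ≤ sndEvenMax S ∧ P x} = #{a : ↥(Sprime S) | P (ofSprime a)} := by
  symm
  refine card_bij (fun a _ => ofSprime a) (fun a ha => ?_) (fun a _ b _ h => ?_) (fun x hx => ?_)
  · simp only [mem_filter, mem_univ, true_and] at ha ⊢
    exact ⟨(mem_filter.1 a.2).2, ha⟩
  · exact Subtype.ext (congrArg (fun x : ↥S => (x : ℕ)) h)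
  · simp only [mem_filter, mem_univ, true_and] at hx
    refine ⟨⟨x, mem_filter.2 ⟨x.2, hx.1⟩⟩, ?_, rfl⟩
    simp only [mem_filter, mem_univ, true_and]
    exact hx.2

theorem fdS_add_fiS (f : ↥S → ↥S) : fdS S f + fiS S f = #{a | IsFixedPtS S f a} := by
  rw [← card_filter_add_card_filter_not (s := univ.filter (IsFixedPtS S f))
    (fun a => ∃ b, b ≠ a ∧ f b = a), filter_filter, filter_filter, fdS, fiS]
  congr 3
  ext a
  simp only [not_exists, not_and]
  exact and_congr_right fun _ => forall_congr' fun b => by tauto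

theorem lt_sup_id_of_mem_sprime (h : 0 < S.sup id) {x : ℕ} (hx : x ∈ Sprime S) : x < S.sup id :=
  (mem_filter.1 hx).2.trans_lt (sndEvenMax_lt h)

theorem sup_id_not_mem_sprime (h : 0 < S.sup id) : S.sup id ∉ Sprime S :=
  fun hM => (lt_sup_id_of_mem_sprime h hM).false

def capToStaircase (hM : S.sup id ∈ S) (b : ↥(Sprime S) → ↥(Sprime S)) (x : ↥S) : ↥S :=
  if h : (x : ℕ) ∈ Sprime S then
    if Odd (b ⟨x, h⟩ : ℕ) then ⟨S.sup id, hM⟩ else ofSprime (b ⟨x, h⟩)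
  else ⟨S.sup id, hM⟩

def staircaseToCap (f : ↥S → ↥S) (a : ↥(Sprime S)) : ↥(Sprime S) :=
  if h : (f (ofSprime a) : ℕ) ∈ Sprime S then ⟨f (ofSprime a), h⟩ else a

theorem coe_capToStaircase_ofSprime (hM : S.sup id ∈ S) (b : ↥(Sprime S) → ↥(Sprime S))
    (a : ↥(Sprime S)) :
    (capToStaircase hM b (ofSprime a) : ℕ) = if Odd (b a : ℕ) then S.sup id else b a := by
  rw [capToStaircase, dif_pos (show (ofSprime a : ℕ) ∈ Sprime S from a.2)]
  simp only [ofSprime, Subtype.coe_eta]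
  split_ifs <;> rfl

theorem coe_capToStaircase_of_not_mem (hM : S.sup id ∈ S) (b : ↥(Sprime S) → ↥(Sprime S))
    {x : ↥S} (hx : (x : ℕ) ∉ Sprime S) : (capToStaircase hM b x : ℕ) = S.sup id := by
  rw [capToStaircase, dif_neg hx]

theorem exists_ofSprime_eq {x : ↥S} (hx : (x : ℕ) ∈ Sprime S) : ∃ a, ofSprime a = x :=
  ⟨⟨x, hx⟩, rfl⟩

theorem mem_staircases {f : ↥S → ↥S} :
    f ∈ Staircases S ↔
      (∀ a : ↥S, (a : ℕ) ≤ f a ∧ Even (f a : ℕ)) ∧ ∀ b : ↥S, Even (b : ℕ) → ∃ a, f a = b := by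
  simp only [Staircases, mem_filter, mem_univ, true_and]

variable {b : ↥(Sprime S) → ↥(Sprime S)}

theorem capToStaircase_mem_staircases (hev : Even (S.sup id)) (hpos : 0 < S.sup id)
    (hb : IsCappedStaircaseOff (↑) ∅ b) :
    capToStaircase (sup_id_mem_of_pos hpos) b ∈ Staircases S := by
  obtain ⟨h1, -, h3⟩ := hb
  refine mem_staircases.2 ⟨fun x => ?_, fun y hy => ?_⟩
  · by_cases hx : (x : ℕ) ∈ Sprime S
    · obtain ⟨a, rfl⟩ := exists_ofSprime_eq hx
      rw [coe_capToStaircase_ofSprime]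
      split_ifs with hodd
      · exact ⟨le_sup (f := id) (ofSprime a).2, hev⟩
      · exact ⟨h1 a, Nat.not_odd_iff_even.1 hodd⟩
    · rw [coe_capToStaircase_of_not_mem _ _ hx]
      exact ⟨le_sup (f := id) x.2, hev⟩
  · by_cases hyM : (y : ℕ) = S.sup id
    · refine ⟨y, Subtype.ext ?_⟩
      rw [coe_capToStaircase_of_not_mem _ _ (hyM ▸ sup_id_not_mem_sprime hpos), hyM]
    · obtain ⟨a, ha⟩ :=
        h3 ⟨y, mem_filter.2 ⟨y.2, le_sndEvenMax y.2 hy hyM⟩⟩ (Set.notMem_empty _) hy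
      refine ⟨ofSprime a, Subtype.ext ?_⟩
      rw [coe_capToStaircase_ofSprime, ha, if_neg (Nat.not_odd_iff_even.2 hy)]

theorem meS_capToStaircase (hpos : 0 < S.sup id) (hb : IsCappedStaircaseOff (↑) ∅ b) :
    meS S (capToStaircase (sup_id_mem_of_pos hpos) b) = 0 := by
  rw [meS, card_eq_zero, filter_eq_empty_iff]
  rintro x - ⟨hxm, hxe, hxM⟩
  obtain ⟨a, rfl⟩ := exists_ofSprime_eq (mem_filter.2 ⟨x.2, hxm⟩)
  rw [coe_capToStaircase_ofSprime] at hxM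
  split_ifs at hxM with hodd
  · rw [hb.2.1 a hodd] at hodd
    exact Nat.not_even_iff_odd.2 hodd hxe
  · exact sup_id_not_mem_sprime hpos (hxM ▸ (b a).2)

theorem staircaseToCap_isCappedStaircaseOff {f : ↥S → ↥S} (hf : f ∈ Staircases S) :
    IsCappedStaircaseOff (↑) ∅ (staircaseToCap f) := by
  obtain ⟨hf1, hf2⟩ := mem_staircases.1 hf
  refine ⟨fun a => ?_, fun a ha => ?_, fun e _ he => ?_⟩
  · unfold staircaseToCap
    split_ifs
    exacts [(hf1 (ofSprime a)).1, le_rfl]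
  · unfold staircaseToCap at ha ⊢
    split_ifs at ha ⊢
    · exact absurd (hf1 _).2 (Nat.not_even_iff_odd.2 ha)
    · rfl
  · obtain ⟨x, hx⟩ := hf2 (ofSprime e) he
    have hxe : (x : ℕ) ≤ e := by simpa [hx, ofSprime] using (hf1 x).1
    refine ⟨⟨x, mem_filter.2 ⟨x.2, hxe.trans (mem_filter.1 e.2).2⟩⟩, ?_⟩
    simp [staircaseToCap, ofSprime, hx, e.2]

theorem staircaseToCap_capToStaircase (hpos : 0 < S.sup id)
    (hb : IsCappedStaircaseOff (↑) ∅ b) :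
    staircaseToCap (capToStaircase (sup_id_mem_of_pos hpos) b) = b := by
  funext a
  have hval := coe_capToStaircase_ofSprime (sup_id_mem_of_pos hpos) b a
  rw [staircaseToCap]
  split_ifs at hval with hodd
  · rw [dif_neg (hval ▸ sup_id_not_mem_sprime hpos), hb.2.1 a hodd]
  · rw [dif_pos (hval ▸ (b a).2)]
    exact Subtype.ext hval

theorem capToStaircase_staircaseToCap (hpos : 0 < S.sup id) {f : ↥S → ↥S}
    (hf : f ∈ Staircases S) (hme : meS S f = 0) :
    capToStaircase (sup_id_mem_of_pos hpos) (staircaseToCap f) = f := by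
  obtain ⟨hf1, -⟩ := mem_staircases.1 hf
  have hmax : ∀ x, (f x : ℕ) ∉ Sprime S → (f x : ℕ) = S.sup id := fun x hx =>
    by_contra fun hne => hx (mem_filter.2 ⟨(f x).2, le_sndEvenMax (f x).2 (hf1 x).2 hne⟩)
  funext x
  apply Subtype.ext
  by_cases hx : (x : ℕ) ∈ Sprime S
  · obtain ⟨a, rfl⟩ := exists_ofSprime_eq hx
    rw [coe_capToStaircase_ofSprime]
    by_cases hfx : (f (ofSprime a) : ℕ) ∈ Sprime S
    · simp only [staircaseToCap, dif_pos hfx, if_neg (Nat.not_odd_iff_even.2 (hf1 _).2)]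
    · rw [staircaseToCap, dif_neg hfx, hmax _ hfx, ite_eq_left_iff]
      intro hodd
      refine absurd hme (card_ne_zero.2 ⟨ofSprime a, mem_filter.2 ⟨mem_univ _, ?_⟩⟩)
      exact ⟨(mem_filter.1 a.2).2, Nat.not_odd_iff_even.1 hodd, hmax _ hfx⟩
  · rw [coe_capToStaircase_of_not_mem _ _ hx]
    refine (hmax x fun hfx => hx (mem_filter.2 ⟨x.2, ?_⟩)).symm
    exact (hf1 x).1.trans (mem_filter.1 hfx).2

theorem moS_add_card_isFixedPtS_capToStaircase (hpos : 0 < S.sup id)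
    (hb : IsCappedStaircaseOff (↑) ∅ b) :
    moS S (capToStaircase (sup_id_mem_of_pos hpos) b) +
      #{a | IsFixedPtS S (capToStaircase (sup_id_mem_of_pos hpos) b) a} = fixCount b := by
  rw [moS, ← card_union_of_disjoint (disjoint_filter.2 fun x _ h1 h2 =>
    Nat.not_even_iff_odd.2 h1.2.1 h2.2.1), ← filter_or]
  simp only [IsFixedPtS, ← and_or_left]
  rw [card_filter_le_sndEvenMax, fixCount]
  refine congrArg card (filter_congr fun a _ => ?_)
  simp only [Subtype.ext_iff, coe_capToStaircase_ofSprime, coe_ofSprime]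
  constructor
  · rintro (⟨-, h⟩ | ⟨-, h⟩) <;> split_ifs at h with hodd
    · exact congrArg Subtype.val (hb.2.1 a hodd)
    · exact absurd h (lt_sup_id_of_mem_sprime hpos (b a).2).ne
    · exact absurd h.symm (lt_sup_id_of_mem_sprime hpos a.2).ne
    · exact h
  · intro h
    rcases Nat.even_or_odd (a : ℕ) with ha | ha
    · exact .inr ⟨ha, by rw [if_neg (h ▸ Nat.not_odd_iff_even.2 ha), h]⟩
    · exact .inl ⟨ha, if_pos (h ▸ ha)⟩

theorem lam_eq_cappedStaircaseSum {R : Type} [CommRing R] (hev : Even (S.sup id))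
    (hpos : 0 < S.sup id) (t : R) :
    Lam R S t t 1 0 t 1 = cappedStaircaseSum (Subtype.val : ↥(Sprime S) → ℕ) t ∅ := by
  have hLam : Lam R S t t 1 0 t 1 = ∑ f ∈ Staircases S with meS S f = 0,
      t ^ (moS S f + #{a | IsFixedPtS S f a}) := by
    rw [Lam, sum_filter]
    refine sum_congr rfl fun f _ => ?_
    split_ifs with h
    · rw [h, ← fdS_add_fiS]
      ring
    · simp [zero_pow h]
  rw [hLam, cappedStaircaseSum]
  refine (sum_nbij' (capToStaircase (sup_id_mem_of_pos hpos)) staircaseToCap (fun b hb => ?_)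
    (fun f hf => ?_) (fun b hb => ?_) (fun f hf => ?_) (fun b hb => ?_)).symm
  · simp only [mem_filter, mem_univ, true_and] at hb ⊢
    exact ⟨capToStaircase_mem_staircases hev hpos hb, meS_capToStaircase hpos hb⟩
  · simp only [mem_filter, mem_univ, true_and] at hf ⊢
    exact staircaseToCap_isCappedStaircaseOff hf.1
  · exact staircaseToCap_capToStaircase hpos (mem_filter.1 hb).2
  · exact capToStaircase_staircaseToCap hpos (mem_filter.1 hf).1 (mem_filter.1 hf).2
  · rw [moS_add_card_isFixedPtS_capToStaircase hpos (mem_filter.1 hb).2]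

end Staircases

section Union

variable {V Rk : Finset ℕ} {M : ℕ}

theorem sup_union_eq (hM : Rk.filter Even = {M}) (hRbig : ∀ a ∈ Rk, ∀ v ∈ V, v < a)
    (hRord : ∀ a ∈ Rk, ∀ b ∈ Rk, Even a → Odd b → b < a) : (V ∪ Rk).sup id = M := by
  have hMR : M ∈ Rk.filter Even := hM ▸ mem_singleton_self M
  refine le_antisymm (Finset.sup_le fun x hx => ?_)
    (le_sup (f := id) (mem_union_right _ (mem_filter.1 hMR).1))
  rcases mem_union.1 hx with hx | hx
  · exact (hRbig M (mem_filter.1 hMR).1 x hx).le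
  rcases Nat.even_or_odd x with he | ho
  · exact (mem_singleton.1 (hM ▸ mem_filter.2 ⟨hx, he⟩)).le
  · exact (hRord M (mem_filter.1 hMR).1 x hx (mem_filter.1 hMR).2 ho).le

theorem sndEvenMax_union_eq (hne : V.Nonempty) (hmax : Even (V.max' hne))
    (hM : Rk.filter Even = {M})
    (hRbig : ∀ a ∈ Rk, ∀ v ∈ V, v < a) (hRord : ∀ a ∈ Rk, ∀ b ∈ Rk, Even a → Odd b → b < a) :
    sndEvenMax (V ∪ Rk) = V.max' hne := by
  have hMR : M ∈ Rk := (mem_filter.1 (hM ▸ mem_singleton_self M)).1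
  have hevens : ((V ∪ Rk).filter Even).erase M = V.filter Even := by
    ext x
    simp only [mem_erase, mem_filter, mem_union]
    constructor
    · rintro ⟨hxM, hx | hx, he⟩
      · exact ⟨hx, he⟩
      · exact absurd (mem_singleton.1 (hM ▸ mem_filter.2 ⟨hx, he⟩)) hxM
    · rintro ⟨hx, he⟩
      exact ⟨(hRbig M hMR x hx).ne, .inl hx, he⟩
  rw [sndEvenMax, sup_union_eq hM hRbig hRord, hevens]
  exact le_antisymm (Finset.sup_le fun x hx => V.le_max' x (mem_filter.1 hx).1)
    (le_sup (f := id) (mem_filter.2 ⟨V.max'_mem hne, hmax⟩))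

theorem sprime_union_eq (hne : V.Nonempty) (hmax : Even (V.max' hne))
    (hM : Rk.filter Even = {M})
    (hRbig : ∀ a ∈ Rk, ∀ v ∈ V, v < a) (hRord : ∀ a ∈ Rk, ∀ b ∈ Rk, Even a → Odd b → b < a) :
    Sprime (V ∪ Rk) = V := by
  ext x
  rw [Sprime, sndEvenMax_union_eq hne hmax hM hRbig hRord, mem_filter, mem_union]
  refine ⟨fun ⟨hx, hxle⟩ => hx.resolve_right fun hxR => ?_, fun hx => ⟨.inl hx, V.le_max' x hx⟩⟩
  exact (hRbig x hxR _ (V.max'_mem hne)).not_ge hxle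

end Union

theorem sum_dPerms_eq_dPermSum {R : Type*} [CommSemiring R] (V : Finset ℕ) (t : R) :
    ∑ σ ∈ DPerms V, t ^ cycCount σ = dPermSum (Subtype.val : ↥V → ℕ) t ∅ := by
  simp only [dPermSum, DPerms, IsDPermOff, Set.mem_empty_iff_false, not_false_eq_true,
    forall_const]
  rfl

theorem dPerm_cycle_sum_eq_lam_general (V Rk : Finset ℕ) (hne : V.Nonempty)
    (hmax : Even (V.max' hne))
    (hReven : (Rk.filter fun a => Even a).card = 1)
    (hRbig : ∀ a ∈ Rk, ∀ v ∈ V, v < a)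
    (hRord : ∀ a ∈ Rk, ∀ b ∈ Rk, Even a → Odd b → b < a) :
    ∑ σ ∈ DPerms V, (Polynomial.X : Polynomial ℤ) ^ cycCount σ =
      Lam (Polynomial ℤ) (V ∪ Rk) Polynomial.X Polynomial.X 1 0 Polynomial.X 1 := by
  obtain ⟨M, hM⟩ := card_eq_one.1 hReven
  have hMR : M ∈ Rk.filter Even := hM ▸ mem_singleton_self M
  have hsup := sup_union_eq hM hRbig hRord
  have hpos : 0 < (V ∪ Rk).sup id :=
    hsup ▸ (V.max' hne).zero_le.trans_lt (hRbig M (mem_filter.1 hMR).1 _ (V.max'_mem hne))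
  rw [sum_dPerms_eq_dPermSum, dPermSum_eq_cappedStaircaseSum Subtype.val_injective (by simp),
    lam_eq_cappedStaircaseSum (hsup ▸ (mem_filter.1 hMR).2) hpos,
    sprime_union_eq hne hmax hM hRbig hRord]

/-- For a finite set `V` of positive integers with even maximum and `R_k` consisting
of `k` odd numbers exceeding `max V` and one even number exceeding those,
`∑_{σ ∈ D_V} t^{c(σ)} = Λ_{V ∪ R_k}(t, t, 1, 0, t, 1)`. -/
theorem dPerm_cycle_sum_eq_lam (k : ℕ) (V Rk : Finset ℕ) (hne : V.Nonempty)
    (hpos : ∀ v ∈ V, 0 < v) (hmax : Even (V.max' hne))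
    (hRodd : (Rk.filter fun a => Odd a).card = k)
    (hReven : (Rk.filter fun a => Even a).card = 1)
    (hRbig : ∀ a ∈ Rk, ∀ v ∈ V, v < a)
    (hRord : ∀ a ∈ Rk, ∀ b ∈ Rk, Even a → Odd b → b < a) :
    ∑ σ ∈ DPerms V, (Polynomial.X : Polynomial ℤ) ^ cycCount σ =
      Lam (Polynomial ℤ) (V ∪ Rk) Polynomial.X Polynomial.X 1 0 Polynomial.X 1 :=
  dPerm_cycle_sum_eq_lam_general V Rk hne hmax hReven hRbig hRord

end
end

section
/- For each n, k >= 1 let G_{n,k} be a Ferrers graph whose associated partition is (nk, (n-1)k, ..., k). Then sum_{n>=1} ch(G_{n,k})(t) u^n = sum_{n>=1} [(t)_n ((t-1)_n)^k u^n] / prod_{i=1}^n (1 - i(t-i)^k u), where ch denotes the chromatic polynomial and (a)_n = a(a-1)...(a-n+1). -/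
attribute [local instance] Classical.propDecidable

noncomputable section

/-!
The row partition `(k, 2k, …, nk)` forces row `i` to be adjacent to exactly the first `(i+1)k`
columns, so the columns fall into `n` blocks of `k`, block `b` being adjacent to the rows `i ≥ b`.
Colour the rows first, by `f`; every column of block `b` then has `q - |f({i ≥ b})|` colours left,
so `ch(G_{n,k})(q) = ∑_f ∏_b (q - |f({i ≥ b})|)^k`.

Sort this sum by the number `d` of colours used on the rows into `T(n, d)`. Adding a new row in
front (the row seeing only the first block), its colour is either one of the `d` old ones or one of
`q - d + 1` new ones, so `T(n+1, d) = d (q-d)^k T(n, d) + (q-d+1) (q-d)^k T(n, d-1)`. For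
`F_d = ∑_n T(n, d) u^n` this reads `(1 - d(q-d)^k u) F_d = (q-d+1)(q-d)^k u F_{d-1}`, whence
`F_d = (q)_d ((q-1)_d)^k u^d / ∏_{i ≤ d} (1 - i(q-i)^k u)`. Both sides of the theorem are
polynomials in `q`, and they agree at every natural number `q`.
-/

open Finset

theorem Finset.Icc_one_val_map_eq_ofFn {α : Type*} (n : ℕ) (g : ℕ → α) :
    (Icc 1 n).val.map g = List.ofFn fun i : Fin n => g (i + 1) := by
  have hIcc : Icc 1 n =
      (univ : Finset (Fin n)).map (Fin.valEmbedding.trans (addRightEmbedding 1)) := by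
    ext x
    simp only [mem_Icc, mem_map, mem_univ, true_and, Function.Embedding.trans_apply,
      Fin.valEmbedding_apply, addRightEmbedding_apply]
    exact ⟨fun h => ⟨⟨x - 1, by omega⟩, by simp only; omega⟩, by rintro ⟨i, rfl⟩; omega⟩
  rw [← Fin.univ_val_map, hIcc, map_val, Multiset.map_map]
  rfl

theorem Fin.mem_iff_lt_card_of_forall_le_mem {m : ℕ} {s : Finset (Fin m)}
    (hs : ∀ j ∈ s, ∀ j' ≤ j, j' ∈ s) (j : Fin m) : j ∈ s ↔ (j : ℕ) < #s := by
  constructor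
  · intro hj
    have := card_le_card fun j' hj' => hs j hj j' (mem_Iic.1 hj')
    rw [Fin.card_Iic] at this
    omega
  · intro hj
    by_contra hjs
    have := card_le_card fun j' (hj' : j' ∈ s) =>
      mem_Iio.2 (lt_of_not_ge fun h => hjs (hs j' hj' j h))
    rw [Fin.card_Iio] at this
    omega

theorem Fin.image_cons_univ {α : Type*} [DecidableEq α] {n : ℕ} (v : α) (f : Fin n → α) :
    univ.image (Fin.cons v f : Fin (n + 1) → α) = insert v (univ.image f) := by
  ext x
  simp [Fin.exists_fin_succ, eq_comm]

theorem Finset.sum_card_insert {α M : Type*} [Fintype α] [DecidableEq α] [AddCommMonoid M]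
    (s : Finset α) (g : ℕ → M) :
    ∑ a, g #(insert a s) = #s • g #s + (Fintype.card α - #s) • g (#s + 1) := by
  rw [← sum_add_sum_compl s, ← card_compl, ← sum_const, ← sum_const]
  congr 1
  · exact sum_congr rfl fun a ha => by rw [insert_eq_self.2 ha]
  · exact sum_congr rfl fun a ha => by rw [card_insert_of_notMem (mem_compl.1 ha)]

theorem PowerSeries.map_invOfUnit_one {R S : Type*} [CommRing R] [CommRing S] (f : R →+* S)
    (φ : PowerSeries R) (hφ : constantCoeff φ = ((1 : Rˣ) : R)) :
    map f (invOfUnit φ 1) = invOfUnit (map f φ) 1 := by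
  have hfφ : constantCoeff (map f φ) = ((1 : Sˣ) : S) := by
    simp [← coeff_zero_eq_constantCoeff_apply, coeff_map, hφ]
  calc map f (invOfUnit φ 1) = invOfUnit (map f φ) 1 * map f φ * map f (invOfUnit φ 1) := by
        rw [invOfUnit_mul _ _ hfφ, one_mul]
    _ = invOfUnit (map f φ) 1 := by
        rw [mul_assoc, ← map_mul, mul_invOfUnit _ _ hφ, map_one, mul_one]

namespace FerrersGraph

section Degrees

variable (G : FerrersGraph)

def degree (i : Fin G.n) : ℕ := #{j | G.adj i j}

theorem degree_mono : Monotone G.degree := fun i i' h =>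
  card_le_card fun j hj => by
    simp only [mem_filter, mem_univ, true_and] at hj ⊢
    exact G.mono i i' j j hj h le_rfl

theorem adj_iff_lt_degree (i : Fin G.n) (j : Fin G.m) : G.adj i j ↔ (j : ℕ) < G.degree i := by
  have := Fin.mem_iff_lt_card_of_forall_le_mem (s := {j | G.adj i j})
    (fun j hj j' hj' => by
      simp only [mem_filter, mem_univ, true_and] at hj ⊢
      exact G.mono i i j j' hj le_rfl hj') j
  simpa [degree] using this

theorem m_eq_degree_last : G.m = G.degree ⟨G.n - 1, Nat.sub_lt G.hn one_pos⟩ := by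
  refine le_antisymm ?_ ((card_le_univ _).trans_eq (Fintype.card_fin _))
  have := (G.adj_iff_lt_degree _ _).1 G.corner2
  simp only at this
  omega

theorem rowPartition_eq_ofFn_degree : G.rowPartition = List.ofFn G.degree := by
  simp only [rowPartition, Fin.univ_val_map]
  rfl

end Degrees

section Colorings

variable (G : FerrersGraph)

theorem graph_adj_inl_inr_s13 (i : Fin G.n) (j : Fin G.m) :
    G.graph.Adj (.inl i) (.inr j) ↔ G.adj i j := by
  simp [graph, SimpleGraph.fromRel_adj]

def coloringEquiv (α : Type*) : G.graph.Coloring α ≃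
    Σ f : Fin G.n → α, ∀ j : Fin G.m, {x : α // x ∉ image f {i | G.adj i j}} :=
  calc G.graph.Coloring α
      ≃ {c : Fin G.n ⊕ Fin G.m → α // ∀ i j, G.adj i j → c (.inl i) ≠ c (.inr j)} :=
        { toFun := fun c => ⟨c, fun i j h => c.valid ((G.graph_adj_inl_inr_s13 i j).2 h)⟩
          invFun := fun c => SimpleGraph.Coloring.mk c.1 fun {u v} huv => by
            match u, v with
            | .inl _, .inl _ => simp [graph] at huv
            | .inl i, .inr j => exact c.2 i j ((G.graph_adj_inl_inr_s13 i j).1 huv)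
            | .inr j, .inl i => exact (c.2 i j ((G.graph_adj_inl_inr_s13 i j).1 huv.symm)).symm
            | .inr _, .inr _ => simp [graph] at huv
          left_inv := fun _ => rfl
          right_inv := fun _ => rfl }
    _ ≃ {p : (Fin G.n → α) × (Fin G.m → α) // ∀ i j, G.adj i j → p.1 i ≠ p.2 j} :=
        Equiv.subtypeEquiv (Equiv.sumArrowEquivProdArrow _ _ _) fun _ => Iff.rfl
    _ ≃ Σ f : Fin G.n → α, {g : Fin G.m → α // ∀ i j, G.adj i j → f i ≠ g j} :=
        Equiv.subtypeProdEquivSigmaSubtype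
          fun (f : Fin G.n → α) (g : Fin G.m → α) => ∀ i j, G.adj i j → f i ≠ g j
    _ ≃ _ := Equiv.sigmaCongrRight fun f =>
        (Equiv.subtypeEquivRight fun g => by simp [forall_comm (α := Fin G.n)]).trans
          Equiv.subtypePiEquivPi

theorem card_coloring (α : Type*) [Fintype α] :
    Nat.card (G.graph.Coloring α) =
      ∑ f : Fin G.n → α, ∏ j : Fin G.m, (Fintype.card α - #(image f {i | G.adj i j})) := by
  rw [Nat.card_congr (G.coloringEquiv α), Nat.card_eq_fintype_card, Fintype.card_sigma]
  refine sum_congr rfl fun f _ => ?_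
  rw [Fintype.card_pi]
  refine prod_congr rfl fun j _ => ?_
  rw [Fintype.card_subtype_compl, Fintype.card_coe]

end Colorings

def HasStaircasePartition (G : FerrersGraph) (n k : ℕ) : Prop :=
  G.rowPartition = (Icc 1 n).val.map (· * k)

section Staircase

variable {G : FerrersGraph} {n k : ℕ}

theorem HasStaircasePartition.n_eq (hG : G.HasStaircasePartition n k) : G.n = n := by
  simpa [rowPartition] using congrArg Multiset.card hG

theorem HasStaircasePartition.degree_eq (hG : G.HasStaircasePartition n k) (i : Fin G.n) :
    G.degree i = (i + 1) * k := by
  obtain rfl := hG.n_eq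
  rw [HasStaircasePartition, rowPartition_eq_ofFn_degree, Icc_one_val_map_eq_ofFn,
    Multiset.coe_eq_coe] at hG
  have hmono : Monotone fun i : Fin G.n => ((i : ℕ) + 1) * k := fun a b h =>
    Nat.mul_le_mul_right k (Nat.succ_le_succ h)
  exact congrFun (List.ofFn_injective
    (hG.eq_of_sortedLE G.degree_mono.sortedLE_ofFn hmono.sortedLE_ofFn)) i

theorem HasStaircasePartition.m_eq (hG : G.HasStaircasePartition n k) : G.m = G.n * k := by
  rw [m_eq_degree_last, hG.degree_eq, Fin.val_mk, Nat.sub_one_add_one G.hn.ne']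

theorem HasStaircasePartition.adj_iff (hG : G.HasStaircasePartition n k) (i : Fin G.n)
    (j : Fin G.m) : G.adj i j ↔ (j : ℕ) < (i + 1) * k := by
  rw [adj_iff_lt_degree, hG.degree_eq]

/-- Column `(b, r)`, the `r`-th column of the `b`-th block of `k` columns. -/
theorem HasStaircasePartition.adj_finProdFinEquiv_iff (hG : G.HasStaircasePartition n k)
    (i b : Fin G.n) (r : Fin k) :
    G.adj i ((finProdFinEquiv.trans (finCongr hG.m_eq.symm)) (b, r)) ↔ b ≤ i := by
  rw [hG.adj_iff, Equiv.trans_apply, finCongr_apply, Fin.val_cast, finProdFinEquiv_apply_val,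
    Fin.le_iff_val_le_val]
  have := r.isLt
  constructor <;> intro h
  · by_contra h'
    nlinarith
  · nlinarith

end Staircase

/-- `q - |f({i ≥ b})|` colours are left for each of the `k` columns of block `b`. -/
def staircaseWeight {n q : ℕ} (k : ℕ) (f : Fin n → Fin q) : ℤ :=
  ∏ b : Fin n, ((q : ℤ) - #(image f {i | b ≤ i})) ^ k

theorem HasStaircasePartition.card_coloring {G : FerrersGraph} {n k : ℕ}
    (hG : G.HasStaircasePartition n k) (q : ℕ) :
    (Nat.card (G.graph.Coloring (Fin q)) : ℤ) = ∑ f : Fin n → Fin q, staircaseWeight k f := by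
  obtain rfl := hG.n_eq
  rw [G.card_coloring, Fintype.card_fin, Nat.cast_sum]
  refine sum_congr rfl fun f _ => ?_
  rw [← (finProdFinEquiv.trans (finCongr hG.m_eq.symm)).prod_comp, Fintype.prod_prod_type]
  simp only [hG.adj_finProdFinEquiv_iff, Fin.prod_const, Nat.cast_prod, Nat.cast_pow]
  refine prod_congr rfl fun b _ => ?_
  rw [Nat.cast_sub ((card_le_univ _).trans_eq (Fintype.card_fin q))]
  congr!

def staircaseCount (q k n d : ℕ) : ℤ :=
  ∑ f : Fin n → Fin q with #(univ.image f) = d, staircaseWeight k f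

section Counting

variable {q : ℕ} (k : ℕ)

theorem staircaseWeight_cons {n : ℕ} (v : Fin q) (f : Fin n → Fin q) :
    staircaseWeight k (Fin.cons v f : Fin (n + 1) → Fin q) =
      ((q : ℤ) - #(insert v (univ.image f))) ^ k * staircaseWeight k f := by
  rw [staircaseWeight, Fin.prod_univ_succ]
  congr 1
  · simp [Fin.image_cons_univ]
  · refine prod_congr rfl fun b _ => ?_
    congr 4
    ext x
    simp [Fin.exists_fin_succ, Fin.succ_le_succ_iff]

theorem staircaseCount_succ_succ (n d : ℕ) :
    staircaseCount q k (n + 1) (d + 1) =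
      (d + 1) * ((q : ℤ) - (d + 1)) ^ k * staircaseCount q k n (d + 1) +
        ((q : ℤ) - d) * ((q : ℤ) - (d + 1)) ^ k * staircaseCount q k n d := by
  rw [staircaseCount, sum_filter, ← (Fin.consEquiv fun _ => Fin q).sum_comp,
    Fintype.sum_prod_type, sum_comm]
  simp only [Fin.consEquiv, Equiv.coe_fn_mk, Fin.image_cons_univ, staircaseWeight_cons]
  -- the colour `v` of the new row is either one of the colours of `f` or a new one
  rw [sum_congr rfl fun f _ => sum_card_insert (univ.image f)
    fun c => if c = d + 1 then ((q : ℤ) - c) ^ k * staircaseWeight k f else 0]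
  simp only [staircaseCount, sum_filter, mul_sum, ← sum_add_distrib, Fintype.card_fin]
  refine sum_congr rfl fun f _ => ?_
  have hle : #(univ.image f) ≤ q := (card_le_univ _).trans_eq (Fintype.card_fin q)
  generalize #(univ.image f) = c at hle ⊢
  rw [nsmul_eq_mul, nsmul_eq_mul, Nat.cast_sub hle]
  obtain rfl | rfl | hc : c = d + 1 ∨ c = d ∨ (c ≠ d + 1 ∧ c ≠ d) := by omega
  · simp only [Nat.cast_add, Nat.cast_one, ↓reduceIte, Nat.add_eq_left,
      one_ne_zero, mul_zero, add_zero]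
    ring
  · simp only [Nat.left_eq_add, one_ne_zero, ↓reduceIte, mul_zero,
      Nat.cast_add, Nat.cast_one, zero_add]
    ring
  · simp [hc.1, hc.2]

theorem staircaseCount_zero_zero : staircaseCount q k 0 0 = 1 := by
  simp [staircaseCount, staircaseWeight]

theorem staircaseCount_zero_succ (d : ℕ) : staircaseCount q k 0 (d + 1) = 0 := by
  simp [staircaseCount]

theorem staircaseCount_succ_zero (n : ℕ) : staircaseCount q k (n + 1) 0 = 0 :=
  sum_eq_zero fun f hf => by
    simp only [mem_filter_univ, card_eq_zero, image_eq_empty, univ_eq_empty_iff] at hf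
    exact absurd hf (not_isEmpty_of_nonempty _)

theorem sum_staircaseWeight {n : ℕ} (hn : n ≠ 0) :
    ∑ f : Fin n → Fin q, staircaseWeight k f = ∑ d ∈ Icc 1 n, staircaseCount q k n d := by
  refine (sum_fiberwise_of_maps_to (fun f _ => mem_Icc.2 ⟨?_, ?_⟩) _).symm
  · exact card_pos.2 (univ_nonempty_iff.2 ⟨⟨0, Nat.pos_of_ne_zero hn⟩⟩ |>.image f)
  · exact card_image_le.trans_eq (card_fin n)

end Counting

open PowerSeries

def staircaseSeries (q k d : ℕ) : ℤ⟦X⟧ :=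
  PowerSeries.mk fun n => staircaseCount q k n d

section Series

variable {q : ℕ} (k : ℕ)

theorem staircaseSeries_zero : staircaseSeries q k 0 = 1 := by
  ext (_ | n)
  · simp [staircaseSeries, staircaseCount_zero_zero]
  · simp [staircaseSeries, staircaseCount_succ_zero, coeff_one]

theorem staircaseSeries_succ (d : ℕ) :
    (1 - C ((d + 1 : ℤ) * ((q : ℤ) - (d + 1)) ^ k) * X) * staircaseSeries q k (d + 1) =
      C (((q : ℤ) - d) * ((q : ℤ) - (d + 1)) ^ k) * X * staircaseSeries q k d := by
  ext (_ | n)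
  · simp [staircaseSeries, staircaseCount_zero_succ]
  · simp only [sub_mul, one_mul, map_sub, mul_comm _ X, mul_assoc, coeff_succ_X_mul, coeff_C_mul,
      staircaseSeries, coeff_mk, staircaseCount_succ_succ]
    ring

theorem prod_mul_staircaseSeries (d : ℕ) :
    (∏ i ∈ Icc 1 d, (1 - C ((i : ℤ) * ((q : ℤ) - i) ^ k) * X)) * staircaseSeries q k d =
      C ((∏ j ∈ range d, ((q : ℤ) - j)) * (∏ j ∈ range d, ((q : ℤ) - 1 - j)) ^ k) * X ^ d := by
  induction d with
  | zero => simp [staircaseSeries_zero]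
  | succ d ih =>
    rw [prod_Icc_succ_top (Nat.le_add_left 1 d), mul_assoc, Nat.cast_succ, staircaseSeries_succ,
      mul_left_comm, ih, prod_range_succ, prod_range_succ, sub_sub _ 1, add_comm 1]
    simp only [map_mul, map_pow]
    ring

theorem staircaseSeries_eq (d : ℕ) :
    staircaseSeries q k d =
      C ((∏ j ∈ range d, ((q : ℤ) - j)) * (∏ j ∈ range d, ((q : ℤ) - 1 - j)) ^ k) * X ^ d *
        invOfUnit (∏ i ∈ Icc 1 d, (1 - C ((i : ℤ) * ((q : ℤ) - i) ^ k) * X)) 1 := by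
  have hunit : constantCoeff (∏ i ∈ Icc 1 d, (1 - C ((i : ℤ) * ((q : ℤ) - i) ^ k) * X)) =
      ((1 : ℤˣ) : ℤ) := by
    simp [map_prod]
  rw [← prod_mul_staircaseSeries, mul_comm, ← mul_assoc, invOfUnit_mul _ _ hunit, one_mul]

end Series

theorem eval_coeff_staircase (q k n N : ℕ) :
    ((coeff N) (C ((∏ j ∈ range n, (Polynomial.X - (j : Polynomial ℤ))) *
        (∏ j ∈ range n, (Polynomial.X - 1 - (j : Polynomial ℤ))) ^ k) * X ^ n *
      invOfUnit (∏ i ∈ Icc 1 n,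
        (1 - C ((i : Polynomial ℤ) * (Polynomial.X - (i : Polynomial ℤ)) ^ k) * X)) 1)).eval
      (q : ℤ) = staircaseCount q k N n := by
  have hunit : constantCoeff (∏ i ∈ Icc 1 n,
      (1 - C ((i : Polynomial ℤ) * (Polynomial.X - (i : Polynomial ℤ)) ^ k) * X)) =
      ((1 : (Polynomial ℤ)ˣ) : Polynomial ℤ) := by
    simp [map_prod]
  rw [← Polynomial.coe_evalRingHom, ← coeff_map, ← coeff_mk N fun N => staircaseCount q k N n,
    ← staircaseSeries, staircaseSeries_eq, map_mul, map_invOfUnit_one _ _ hunit]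
  simp [map_prod]

end FerrersGraph

open PowerSeries Polynomial in
theorem chromatic_ferrers_staircase_generating_function_general (k : ℕ)
    (G : ℕ → FerrersGraph)
    (hG : ∀ n, 1 ≤ n → (G n).rowPartition = (Finset.Icc 1 n).val.map fun i => i * k)
    (ch : ℕ → Polynomial ℤ)
    (hch : ∀ n, 1 ≤ n → ∀ q : ℕ,
      (ch n).eval (q : ℤ) = (Nat.card ((G n).graph.Coloring (Fin q)) : ℤ)) :
    ∀ N : ℕ,
      (PowerSeries.coeff N) (PowerSeries.mk fun j =>
          if j = 0 then 0 else ch j) =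
      ∑ n ∈ Finset.Icc 1 N, (PowerSeries.coeff N)
        (PowerSeries.C ((∏ j ∈ Finset.range n,
              (Polynomial.X - (j : Polynomial ℤ))) *
            (∏ j ∈ Finset.range n, (Polynomial.X - 1 - (j : Polynomial ℤ))) ^ k) *
          PowerSeries.X ^ n *
          PowerSeries.invOfUnit
            (∏ i ∈ Finset.Icc 1 n,
              (1 - PowerSeries.C ((i : Polynomial ℤ) *
                  (Polynomial.X - (i : Polynomial ℤ)) ^ k) * PowerSeries.X)) 1) := by
  intro N
  rw [coeff_mk]
  rcases Nat.eq_zero_or_pos N with rfl | hN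
  · simp
  rw [if_neg hN.ne']
  refine eq_of_infinite_eval_eq _ _ ((Set.infinite_range_of_injective Nat.cast_injective).mono ?_)
  rintro _ ⟨q, rfl⟩
  rw [Set.mem_ofPred_eq, eval_finsetSum, hch N hN q,
    FerrersGraph.HasStaircasePartition.card_coloring (hG N hN),
    FerrersGraph.sum_staircaseWeight k hN.ne']
  simp only [FerrersGraph.eval_coeff_staircase]

open PowerSeries Polynomial in
/-- For `n, k ≥ 1` let `G_{n,k}` be a Ferrers graph with associated partition the
`k`-staircase `(nk, …, 2k, k)`.  Then
`∑_{n≥1} ch(G_{n,k})(t) u^n = ∑_{n≥1} (t)_n ((t-1)_n)^k u^n / ∏_{i=1}^n (1 - i(t-i)^k u)`,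
where `ch` is the chromatic polynomial; the identity of power series in `u` over
`ℤ[t]` is stated coefficientwise (the coefficient of `u^N` of the `n`-th summand on
the right vanishes for `n > N`). -/
theorem chromatic_ferrers_staircase_generating_function (k : ℕ) (hk : 1 ≤ k)
    (G : ℕ → FerrersGraph)
    (hG : ∀ n, 1 ≤ n → (G n).rowPartition = (Finset.Icc 1 n).val.map fun i => i * k)
    (ch : ℕ → Polynomial ℤ)
    (hch : ∀ n, 1 ≤ n → ∀ q : ℕ,
      (ch n).eval (q : ℤ) = (Nat.card ((G n).graph.Coloring (Fin q)) : ℤ)) :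
    ∀ N : ℕ,
      (PowerSeries.coeff N) (PowerSeries.mk fun j =>
          if j = 0 then 0 else ch j) =
      ∑ n ∈ Finset.Icc 1 N, (PowerSeries.coeff N)
        (PowerSeries.C ((∏ j ∈ Finset.range n,
              (Polynomial.X - (j : Polynomial ℤ))) *
            (∏ j ∈ Finset.range n, (Polynomial.X - 1 - (j : Polynomial ℤ))) ^ k) *
          PowerSeries.X ^ n *
          PowerSeries.invOfUnit
            (∏ i ∈ Finset.Icc 1 n,
              (1 - PowerSeries.C ((i : Polynomial ℤ) *
                  (Polynomial.X - (i : Polynomial ℤ)) ^ k) * PowerSeries.X)) 1) :=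
  chromatic_ferrers_staircase_generating_function_general k G hG ch hch
end
end
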